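/- arXiv:2003.13290 — 11 statements merged into one kernel-verified Lean document; each statement's English description precedes it below -/
import Mathlib

section
/- Let G be a finite abelian group and G = MS a complete splitting (every element of G has a unique representation m·s with m ∈ M ⊆ ℤ and s ∈ S ⊆ G). Suppose 0 = m·g with m ∈ M and g ∈ S. Then the map s ↦ m·s from S to m·G is a bijection, i.e., m·S = m·G and |S| = |m·G|. -/
theorem stmt_1 {G : Type*} [AddCommGroup G] [Fintype G]
    (M : Finset ℤ) (S : Finset G)
    (hCS : ∀ x : G, ∃! p : ℤ × G, p.1 ∈ M ∧ p.2 ∈ S ∧ p.1 • p.2 = x)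
    (m : ℤ) (g : G) (hm : m ∈ M) (hg : g ∈ S) (h0 : m • g = 0) :
    Set.BijOn (fun s : G => m • s) (↑S) ((fun x : G => m • x) '' Set.univ) := by
  classical
  set f : G →+ G := AddMonoidHom.mk' (fun x => m • x) (fun a b => smul_add m a b) with hf
  have hinj : Set.InjOn (fun s : G => m • s) ↑S := by
    intro a ha b hb hab
    obtain ⟨p, _, hup⟩ := hCS (m • a)
    have h1 := hup (m, a) ⟨hm, ha, rfl⟩
    have h2 := hup (m, b) ⟨hm, hb, hab.symm⟩
    exact congrArg Prod.snd (h1.trans h2.symm)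
  have hcardG : Fintype.card G = M.card * S.card := by
    rw [← Finset.card_product, Fintype.card, eq_comm]
    apply Finset.card_bij (fun p _ => p.1 • p.2)
    · intros; exact Finset.mem_univ _
    · intro p hp q hq hpq
      obtain ⟨r, _, hur⟩ := hCS (p.1 • p.2)
      rw [Finset.mem_product] at hp hq
      have h1 := hur p ⟨hp.1, hp.2, rfl⟩
      have h2 := hur q ⟨hq.1, hq.2, hpq.symm⟩
      exact h1.trans h2.symm
    · intro x _
      obtain ⟨p, ⟨h1, h2, h3⟩, _⟩ := hCS x
      exact ⟨p, Finset.mem_product.mpr ⟨h1, h2⟩, h3⟩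
  have hKG : Nat.card G = Nat.card f.range * Nat.card f.ker := by
    rw [← Nat.card_congr (QuotientAddGroup.quotientKerEquivRange f).toEquiv]
    exact AddSubgroup.card_eq_card_quotient_mul_card_addSubgroup f.ker
  have hMK : M.card ≤ Nat.card f.ker := by
    have hi : Function.Injective (fun a : M => (⟨(a : ℤ) • g, by
        simp only [f.mem_ker]
        show m • ((a : ℤ) • g) = 0
        rw [smul_comm, h0, smul_zero]⟩ : f.ker)) := by
      intro a b hab
      have hab' : (a : ℤ) • g = (b : ℤ) • g := congrArg Subtype.val hab
      obtain ⟨p, _, hup⟩ := hCS ((a : ℤ) • g)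
      have h1 := hup ((a : ℤ), g) ⟨a.2, hg, rfl⟩
      have h2 := hup ((b : ℤ), g) ⟨b.2, hg, hab'.symm⟩
      exact Subtype.ext (congrArg Prod.fst (h1.trans h2.symm))
    calc M.card = Nat.card M := (Nat.card_eq_finsetCard M).symm
      _ ≤ Nat.card f.ker := Nat.card_le_card_of_injective _ hi
  have hSH : S.card ≤ Nat.card f.range := by
    have hi : Function.Injective (fun s : S => (⟨m • (s : G), ⟨(s : G), rfl⟩⟩ : f.range)) := by
      intro a b hab
      have hab' : m • (a : G) = m • (b : G) := congrArg Subtype.val hab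
      exact Subtype.ext (hinj a.2 b.2 hab')
    calc S.card = Nat.card S := (Nat.card_eq_finsetCard S).symm
      _ ≤ Nat.card f.range := Nat.card_le_card_of_injective _ hi
  have hMpos : 0 < M.card := Finset.card_pos.mpr ⟨m, hm⟩
  have hprod : Nat.card f.range * Nat.card f.ker = M.card * S.card := by
    rw [← hKG, Nat.card_eq_fintype_card, hcardG]
  have hHS : Nat.card f.range = S.card := by
    have h1 : M.card * S.card ≤ M.card * Nat.card f.range := Nat.mul_le_mul_left _ hSH
    have h2 : M.card * Nat.card f.range ≤ Nat.card f.ker * Nat.card f.range :=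
      Nat.mul_le_mul_right _ hMK
    have h3 : M.card * Nat.card f.range = M.card * S.card :=
      le_antisymm (hprod ▸ (mul_comm (Nat.card f.ker) (Nat.card f.range) ▸ h2)) h1
    exact Nat.eq_of_mul_eq_mul_left hMpos h3
  have hset : (fun s : G => m • s) '' ↑S = (f.range : Set G) := by
    apply Set.eq_of_subset_of_ncard_le (ht := Set.toFinite _)
    · rintro _ ⟨s, hs, rfl⟩; exact ⟨s, rfl⟩
    · rw [Set.ncard_image_of_injOn hinj, Set.ncard_coe_finset]
      rw [← Nat.card_coe_set_eq]
      simp only [SetLike.coe_sort_coe]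
      omega
  have himg : (fun x : G => m • x) '' Set.univ = (f.range : Set G) := by
    rw [Set.image_univ]
    ext x
    simp [AddMonoidHom.mem_range, f, eq_comm]
  refine ⟨fun s hs => ⟨s, Set.mem_univ s, rfl⟩, hinj, ?_⟩
  rw [himg, ← hset]
  exact Set.Subset.rfl
end

section
/- Let G be a finite abelian group and G = MS a complete splitting. Suppose 0 = m·g with m ∈ M and g ∈ S. Then M·g = {x ∈ G : m·x = 0}, the kernel of multiplication by m, and |M| = |{x ∈ G : m·x = 0}|. -/
theorem stmt_2 {G : Type*} [AddCommGroup G] [Fintype G] [DecidableEq G]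
    (M : Finset ℤ) (S : Finset G)
    (hCS : ∀ x : G, ∃! p : ℤ × G, p.1 ∈ M ∧ p.2 ∈ S ∧ p.1 • p.2 = x)
    (m : ℤ) (g : G) (hm : m ∈ M) (hg : g ∈ S) (h0 : m • g = 0) :
    M.image (fun m' : ℤ => m' • g) = Finset.univ.filter (fun x : G => m • x = 0) ∧
    M.card = (Finset.univ.filter (fun x : G => m • x = 0)).card := by
  classical
  set f : G →+ G := AddMonoidHom.mk' (fun x => m • x) (fun a b => smul_add m a b) with hf
  -- injectivity of s ↦ m • s on S
  have hSinj : ∀ s1 ∈ S, ∀ s2 ∈ S, m • s1 = m • s2 → s1 = s2 := by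
    intro s1 h1 s2 h2 he
    have := (hCS (m • s1)).unique (y₁ := (m, s1)) (y₂ := (m, s2))
      ⟨hm, h1, rfl⟩ ⟨hm, h2, he.symm⟩
    exact congrArg Prod.snd this
  -- injectivity of m' ↦ m' • g on M
  have hMinj : ∀ a ∈ M, ∀ b ∈ M, a • g = b • g → a = b := by
    intro a ha b hb he
    have := (hCS (a • g)).unique (y₁ := (a, g)) (y₂ := (b, g))
      ⟨ha, hg, rfl⟩ ⟨hb, hg, he.symm⟩
    exact congrArg Prod.fst this
  -- |G| = |M| * |S|
  have hcardG : Fintype.card G = M.card * S.card := by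
    rw [← Finset.card_product, ← Finset.card_univ]
    apply (Finset.card_bij (fun (p : ℤ × G) _ => p.1 • p.2) ?_ ?_ ?_).symm
    · intro p hp; exact Finset.mem_univ _
    · intro p1 hp1 p2 hp2 he
      rw [Finset.mem_product] at hp1 hp2
      exact (hCS (p1.1 • p1.2)).unique ⟨hp1.1, hp1.2, rfl⟩ ⟨hp2.1, hp2.2, he.symm⟩
    · intro x _
      obtain ⟨p, ⟨h1, h2, h3⟩, -⟩ := hCS x
      exact ⟨p, Finset.mem_product.mpr ⟨h1, h2⟩, h3⟩
  -- |G| = |range f| * |ker f|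
  have hker : Nat.card G = Nat.card f.range * Nat.card f.ker := by
    rw [AddSubgroup.card_eq_card_quotient_mul_card_addSubgroup f.ker]
    congr 1
    exact Nat.card_congr (QuotientAddGroup.quotientKerEquivRange f).toEquiv
  -- |S| ≤ |range f|
  have hrange : S.card ≤ Nat.card f.range := by
    rw [Nat.card_eq_fintype_card]
    have : Fintype.card S ≤ Fintype.card f.range := by
      apply Fintype.card_le_of_injective (fun s => ⟨m • (s : G), ⟨s, rfl⟩⟩)
      intro s1 s2 he
      have : m • (s1 : G) = m • (s2 : G) := by simpa using congrArg Subtype.val he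
      exact Subtype.ext (hSinj _ s1.2 _ s2.2 this)
    simpa using this
  -- |ker f| = card of the filter
  have hkerfilter : Nat.card f.ker = (Finset.univ.filter (fun x : G => m • x = 0)).card := by
    rw [Nat.card_eq_fintype_card, ← Fintype.card_subtype]
    exact Fintype.card_congr (Equiv.subtypeEquivRight (fun x => f.mem_ker))
  have hSpos : 0 < S.card := Finset.card_pos.mpr ⟨g, hg⟩
  have h1 : M.card * S.card = Nat.card f.range * Nat.card f.ker := by
    rw [← hcardG, ← Nat.card_eq_fintype_card]; exact hker
  have hk_le : Nat.card f.ker ≤ M.card := by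
    apply Nat.le_of_mul_le_mul_right _ hSpos
    rw [h1, mul_comm (Nat.card f.ker) S.card]
    exact Nat.mul_le_mul hrange le_rfl
  have hsub : M.image (fun m' : ℤ => m' • g) ⊆ Finset.univ.filter (fun x : G => m • x = 0) := by
    intro x hx
    obtain ⟨m', hm', rfl⟩ := Finset.mem_image.mp hx
    simp only [Finset.mem_filter, Finset.mem_univ, true_and]
    rw [smul_comm, h0, smul_zero]
  have himg : (M.image (fun m' : ℤ => m' • g)).card = M.card :=
    Finset.card_image_of_injOn (fun a ha b hb => hMinj a ha b hb)
  have hle : (Finset.univ.filter (fun x : G => m • x = 0)).card ≤ (M.image (fun m' : ℤ => m' • g)).card := by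
    rw [himg, ← hkerfilter]; exact hk_le
  have heq := Finset.eq_of_subset_of_card_le hsub hle
  exact ⟨heq, by rw [← himg, heq]⟩
end

section
/- Let G = ℤ_{n₁} ⊕ ℤ_{n₂} ⊕ ... ⊕ ℤ_{n_k} with 1 < n₁ | n₂ | ... | n_k, and let G = MS be a complete splitting with 0 = m·g, m ∈ M ⊆ ℤ, g ∈ S. Then gcd(m, n_j) = 1 for all 1 ≤ j ≤ k−1, |M| = gcd(m, n_k), g = (0,...,0, y_k · n_k/gcd(m,n_k)) for some integer y_k with gcd(y_k, gcd(m,n_k)) = 1, M·g = ⟨g⟩, and M is a complete set of representatives modulo ord(g). -/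
/-!
Put `N = n_k`, `d = gcd(m, N)` and `u = (0, …, 0, N/d)`, an element of order `d` killed by `m`.
In a complete splitting `a ↦ a • g` is injective on `M` and `s ↦ m • s` is injective on `S`; the
first gives `|M| ≤ ord g`, the second `|ker (m •)| = |G| / |mG| ≤ |G| / |S| = |M|`. Since
`ord g ∣ gcd(m, N) = d` and `⟨u⟩ ≤ ker (m •)`, all these numbers equal `d` and `ker (m •) = ⟨u⟩`.
Everything else is read off: `g = t • u` with `ord (t • u) = d`; for `j < k` the element with
`n_j / gcd(m, n_j)` in place `j` lies in `ker (m •) = ⟨u⟩` only if `gcd(m, n_j) = 1`; and `M` maps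
injectively onto `⟨g⟩`, which has `d` elements.
-/

def IsCompleteSplitting {A : Type*} [SMul ℤ A] (M : Finset ℤ) (S : Finset A) : Prop :=
  ∀ x : A, ∃! p : ℤ × A, p.1 ∈ M ∧ p.2 ∈ S ∧ p.1 • p.2 = x

namespace IsCompleteSplitting

variable {A : Type*} [AddCommGroup A] {M : Finset ℤ} {S : Finset A}

theorem eq_of_zsmul_eq (hMS : IsCompleteSplitting M S) {a b : ℤ} {s t : A}
    (ha : a ∈ M) (hs : s ∈ S) (hb : b ∈ M) (ht : t ∈ S) (h : a • s = b • t) :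
    a = b ∧ s = t := by
  obtain ⟨p, -, hp⟩ := hMS (b • t)
  simpa using (hp (a, s) ⟨ha, hs, h⟩).trans (hp (b, t) ⟨hb, ht, rfl⟩).symm

theorem bijective_zsmul (hMS : IsCompleteSplitting M S) :
    Function.Bijective fun p : ↥(M ×ˢ S) => (p : ℤ × A).1 • (p : ℤ × A).2 := by
  refine ⟨fun ⟨p, hp⟩ ⟨q, hq⟩ h => ?_, fun x => ?_⟩
  · rw [Finset.mem_product] at hp hq
    obtain ⟨h₁, h₂⟩ := hMS.eq_of_zsmul_eq hp.1 hp.2 hq.1 hq.2 h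
    exact Subtype.ext (Prod.ext h₁ h₂)
  · obtain ⟨p, ⟨hp₁, hp₂, hpx⟩, -⟩ := hMS x
    exact ⟨⟨p, Finset.mem_product.mpr ⟨hp₁, hp₂⟩⟩, hpx⟩

theorem finite (hMS : IsCompleteSplitting M S) : Finite A :=
  Finite.of_surjective _ hMS.bijective_zsmul.2

theorem card_eq_mul (hMS : IsCompleteSplitting M S) : Nat.card A = M.card * S.card := by
  rw [← Nat.card_eq_of_bijective _ hMS.bijective_zsmul, Nat.card_eq_finsetCard,
    Finset.card_product]

theorem injOn_zsmul_left (hMS : IsCompleteSplitting M S) {g : A} (hg : g ∈ S) :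
    Set.InjOn (· • g) (M : Set ℤ) :=
  fun _ ha _ hb h => (hMS.eq_of_zsmul_eq ha hg hb hg h).1

theorem injOn_zsmul_right (hMS : IsCompleteSplitting M S) {m : ℤ} (hm : m ∈ M) :
    Set.InjOn (m • ·) (S : Set A) :=
  fun _ hs _ ht h => (hMS.eq_of_zsmul_eq hm hs hm ht h).2

theorem ncard_image_zsmul_left (hMS : IsCompleteSplitting M S) {g : A} (hg : g ∈ S) :
    ((· • g) '' (M : Set ℤ)).ncard = M.card := by
  rw [(hMS.injOn_zsmul_left hg).ncard_image, Set.ncard_coe_finset]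

theorem card_le_addOrderOf (hMS : IsCompleteSplitting M S) {g : A} (hg : g ∈ S) :
    M.card ≤ addOrderOf g := by
  have := hMS.finite
  rw [← hMS.ncard_image_zsmul_left hg, ← Nat.card_zmultiples, ← SetLike.coe_sort_coe,
    Nat.card_coe_set_eq]
  refine Set.ncard_le_ncard ?_ (Set.toFinite _)
  rintro _ ⟨a, -, rfl⟩
  exact AddSubgroup.zsmul_mem_zmultiples g a

theorem card_ker_zsmul_le (hMS : IsCompleteSplitting M S) {m : ℤ} (hm : m ∈ M) :
    Nat.card (zsmulAddGroupHom (α := A) m).ker ≤ M.card := by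
  have := hMS.finite
  set φ := zsmulAddGroupHom (α := A) m
  have hS : S.card ≤ Nat.card φ.range := by
    rw [← Nat.card_eq_finsetCard]
    refine Nat.card_le_card_of_injective (fun s => ⟨m • (s : A), s, rfl⟩) fun s t h => ?_
    exact Subtype.ext (hMS.injOn_zsmul_right hm s.2 t.2 (congrArg Subtype.val h))
  have hSpos : 0 < S.card := by
    obtain ⟨p, ⟨-, hp, -⟩, -⟩ := hMS 0
    exact Finset.card_pos.mpr ⟨p.2, hp⟩
  have key : Nat.card φ.range * Nat.card φ.ker = M.card * S.card := by
    rw [← hMS.card_eq_mul, AddSubgroup.card_eq_card_quotient_mul_card_addSubgroup φ.ker,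
      Nat.card_congr (QuotientAddGroup.quotientKerEquivRange φ).toEquiv]
  nlinarith

theorem image_zsmul_left_eq_zmultiples (hMS : IsCompleteSplitting M S) {g : A} (hg : g ∈ S)
    (hcard : addOrderOf g ≤ M.card) :
    (· • g) '' (M : Set ℤ) = AddSubgroup.zmultiples g := by
  have := hMS.finite
  refine Set.eq_of_subset_of_ncard_le ?_ ?_ (Set.toFinite _)
  · rintro _ ⟨a, -, rfl⟩
    exact AddSubgroup.zsmul_mem_zmultiples g a
  · rwa [hMS.ncard_image_zsmul_left hg, ← Nat.card_coe_set_eq, SetLike.coe_sort_coe,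
      Nat.card_zmultiples]

theorem existsUnique_intCast_eq (hMS : IsCompleteSplitting M S) {g : A} (hg : g ∈ S)
    (himage : (· • g) '' (M : Set ℤ) = AddSubgroup.zmultiples g) (r : ZMod (addOrderOf g)) :
    ∃! a : ℤ, a ∈ M ∧ (a : ZMod (addOrderOf g)) = r := by
  have hcast (a b : ℤ) : (a : ZMod (addOrderOf g)) = b ↔ a • g = b • g := by
    rw [ZMod.intCast_eq_intCast_iff, zsmul_eq_zsmul_iff_modEq]
  obtain ⟨a, ha, hag⟩ : (r.cast : ℤ) • g ∈ (· • g) '' (M : Set ℤ) :=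
    himage ▸ AddSubgroup.zsmul_mem_zmultiples g _
  have har : (a : ZMod (addOrderOf g)) = r := by
    rw [← ZMod.intCast_zmod_cast r, hcast]
    exact hag
  refine ⟨a, ⟨ha, har⟩, fun b ⟨hb, hbr⟩ => hMS.injOn_zsmul_left hg hb ha ?_⟩
  rw [← hcast, hbr, har]

theorem ker_zsmul_eq_zmultiples (hMS : IsCompleteSplitting M S) {m : ℤ} {g u : A}
    (hm : m ∈ M) (hg : g ∈ S) (hu : m • u = 0) (hgu : addOrderOf g ≤ addOrderOf u) :
    M.card = addOrderOf u ∧ addOrderOf g = addOrderOf u ∧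
      (zsmulAddGroupHom (α := A) m).ker = AddSubgroup.zmultiples u := by
  have := hMS.finite
  have hle : AddSubgroup.zmultiples u ≤ (zsmulAddGroupHom (α := A) m).ker :=
    AddSubgroup.zmultiples_le.mpr hu
  have hu_le_ker := Nat.card_zmultiples u ▸ AddSubgroup.card_le_of_le hle
  have hker_le_M := hMS.card_ker_zsmul_le hm
  have hM_le_g := hMS.card_le_addOrderOf hg
  refine ⟨by omega, by omega, (AddSubgroup.eq_of_le_of_card_ge hle ?_).symm⟩
  rw [Nat.card_zmultiples]
  omega

end IsCompleteSplitting

theorem gcd_eq_one_of_addOrderOf_zsmul_eq {A : Type*} [AddGroup A] {u : A} {t : ℤ}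
    (hu : addOrderOf u ≠ 0) (h : addOrderOf (t • u) = addOrderOf u) :
    Int.gcd t (addOrderOf u) = 1 := by
  set d := addOrderOf u
  set s := Int.gcd t d
  obtain ⟨d', hd'⟩ : s ∣ d := Int.natCast_dvd_natCast.mp (Int.gcd_dvd_right t d)
  obtain ⟨t', ht'⟩ : (s : ℤ) ∣ t := Int.gcd_dvd_left t d
  have hdd' : d ∣ d' := by
    rw [← h, addOrderOf_dvd_iff_nsmul_eq_zero, ← natCast_zsmul, smul_smul,
      show (d' : ℤ) * t = t' * d by rw [ht', hd']; push_cast; ring,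
      mul_smul, natCast_zsmul, addOrderOf_nsmul_eq_zero, smul_zero]
  have hd'0 : d' ≠ 0 := by rintro rfl; exact hu hd'
  rw [hd'] at hdd'
  exact (mul_eq_right₀ hd'0).mp (Nat.dvd_antisymm hdd' (Dvd.intro_left _ rfl))

theorem addOrderOf_piSingle {ι : Type*} [DecidableEq ι] {G : ι → Type*}
    [∀ i, AddMonoid (G i)] (i : ι) (x : G i) :
    addOrderOf (Pi.single i x : ∀ j, G j) = addOrderOf x :=
  addOrderOf_injective (AddMonoidHom.single G i) (Pi.single_injective i) x

theorem ZMod.addOrderOf_natCast_div {N d : ℕ} (hN : N ≠ 0) (hd : d ∣ N) :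
    addOrderOf ((N / d : ℕ) : ZMod N) = d := by
  rw [ZMod.addOrderOf_coe _ hN, Nat.gcd_eq_right (Nat.div_dvd_of_dvd hd), Nat.div_div_self hd hN]

theorem ZMod.zsmul_natCast_div_gcd_eq_zero {N : ℕ} (hN : N ≠ 0) (m : ℤ) :
    m • ((N / Int.gcd m N : ℕ) : ZMod N) = 0 := by
  have hdN : Int.gcd m N ∣ N := Int.natCast_dvd_natCast.mp (Int.gcd_dvd_right m N)
  rw [← addOrderOf_dvd_iff_zsmul_eq_zero, ZMod.addOrderOf_natCast_div hN hdN]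
  exact Int.gcd_dvd_left m N

theorem ne_zero_of_finite_pi_zmod {ι : Type*} {n : ι → ℕ} [Finite (∀ i, ZMod (n i))] (i : ι) :
    n i ≠ 0 := by
  have : Finite (ZMod (n i)) :=
    Finite.of_surjective (Function.eval i : (∀ i, ZMod (n i)) → ZMod (n i))
      (Function.surjective_eval i)
  rintro h
  rw [h] at this
  exact not_finite (ZMod 0)

theorem addOrderOf_dvd_of_forall_dvd {ι : Type*} {n : ι → ℕ} {N : ℕ} (hN : ∀ i, n i ∣ N)
    (x : ∀ i, ZMod (n i)) : addOrderOf x ∣ N := by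
  refine addOrderOf_dvd_of_nsmul_eq_zero (funext fun i => ?_)
  rw [Pi.smul_apply, nsmul_eq_mul, (ZMod.natCast_eq_zero_iff N (n i)).mpr (hN i), zero_mul,
    Pi.zero_apply]

theorem gcd_eq_one_of_ker_zsmul_le_zmultiples_single {ι : Type*} [DecidableEq ι]
    {n : ι → ℕ} {j l : ι} (hjl : j ≠ l) (hn : n j ≠ 0) {m : ℤ} {x : ZMod (n l)}
    (h : (zsmulAddGroupHom (α := ∀ i, ZMod (n i)) m).ker ≤
      AddSubgroup.zmultiples (Pi.single l x)) :
    Int.gcd m (n j) = 1 := by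
  set v : ZMod (n j) := ((n j / Int.gcd m (n j) : ℕ) : ZMod (n j))
  have hv : (Pi.single j v : ∀ i, ZMod (n i)) ∈
      (zsmulAddGroupHom (α := ∀ i, ZMod (n i)) m).ker := by
    change m • (Pi.single j v : ∀ i, ZMod (n i)) = 0
    rw [← Pi.single_smul, ZMod.zsmul_natCast_div_gcd_eq_zero hn, Pi.single_zero]
  obtain ⟨t, ht⟩ := AddSubgroup.mem_zmultiples_iff.mp (h hv)
  have hv0 : v = 0 := by
    simpa [← Pi.single_smul, Pi.single_eq_of_ne hjl] using (congrFun ht j).symm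
  have hv_ord : addOrderOf v = Int.gcd m (n j) :=
    ZMod.addOrderOf_natCast_div hn (Int.natCast_dvd_natCast.mp (Int.gcd_dvd_right m (n j)))
  rw [← hv_ord, hv0, addOrderOf_zero]

theorem dvd_last_of_forall_dvd_succ {k : ℕ} {n : Fin (k + 1) → ℕ}
    (hdvd : ∀ i : Fin k, n i.castSucc ∣ n i.succ) (i : Fin (k + 1)) : n i ∣ n (Fin.last k) :=
  Fin.reverseInduction dvd_rfl (fun i hi => (hdvd i).trans hi) i

theorem stmt_3_general (k : ℕ) (n : Fin (k + 1) → ℕ)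
    (hdvd : ∀ i : Fin k, n i.castSucc ∣ n i.succ)
    (M : Finset ℤ) (S : Finset ((i : Fin (k + 1)) → ZMod (n i)))
    (hCS : ∀ x : (i : Fin (k + 1)) → ZMod (n i),
      ∃! p : ℤ × ((i : Fin (k + 1)) → ZMod (n i)),
        p.1 ∈ M ∧ p.2 ∈ S ∧ p.1 • p.2 = x)
    (m : ℤ) (g : (i : Fin (k + 1)) → ZMod (n i))
    (hm : m ∈ M) (hg : g ∈ S) (h0 : m • g = 0) :
    (∀ j : Fin (k + 1), j ≠ Fin.last k → Int.gcd m (n j) = 1) ∧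
    M.card = Int.gcd m (n (Fin.last k)) ∧
    (∃ y : ℤ, Int.gcd y (Int.gcd m (n (Fin.last k))) = 1 ∧
      (∀ i : Fin (k + 1), i ≠ Fin.last k → g i = 0) ∧
      g (Fin.last k) =
        ((y * ((n (Fin.last k) : ℤ) / (Int.gcd m (n (Fin.last k)) : ℤ)) : ℤ) :
          ZMod (n (Fin.last k)))) ∧
    (Set.image (fun m' : ℤ => m' • g) ↑M = ↑(AddSubgroup.zmultiples g)) ∧
    (∀ r : ZMod (addOrderOf g), ∃! m' : ℤ, m' ∈ M ∧ (m' : ZMod (addOrderOf g)) = r) := by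
  have hMS : IsCompleteSplitting M S := hCS
  have := hMS.finite
  set N := n (Fin.last k)
  set d := Int.gcd m N
  have hN : N ≠ 0 := ne_zero_of_finite_pi_zmod _
  have hdN : d ∣ N := Int.natCast_dvd_natCast.mp (Int.gcd_dvd_right m N)
  set u : (i : Fin (k + 1)) → ZMod (n i) := Pi.single (Fin.last k) ((N / d : ℕ) : ZMod N)
  have hu : addOrderOf u = d := by
    rw [addOrderOf_piSingle, ZMod.addOrderOf_natCast_div hN hdN]
  have hmu : m • u = 0 := by
    rw [← Pi.single_smul, ZMod.zsmul_natCast_div_gcd_eq_zero hN, Pi.single_zero]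
  have hgN : addOrderOf g ∣ N := addOrderOf_dvd_of_forall_dvd (dvd_last_of_forall_dvd_succ hdvd) g
  have hgd : addOrderOf g ∣ d :=
    Int.dvd_gcd (addOrderOf_dvd_iff_zsmul_eq_zero.mpr h0) (Int.natCast_dvd_natCast.mpr hgN)
  have hd : d ≠ 0 := ne_zero_of_dvd_ne_zero hN hdN
  obtain ⟨hM, hg_ord, hker⟩ :=
    hMS.ker_zsmul_eq_zmultiples hm hg hmu (hu ▸ Nat.le_of_dvd (Nat.pos_of_ne_zero hd) hgd)
  have himage := hMS.image_zsmul_left_eq_zmultiples hg (hg_ord.trans hM.symm).le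
  obtain ⟨t, rfl⟩ := AddSubgroup.mem_zmultiples_iff.mp (hker.le h0)
  refine ⟨fun j hj => gcd_eq_one_of_ker_zsmul_le_zmultiples_single hj
      (ne_zero_of_finite_pi_zmod j) hker.le, hM.trans hu, ⟨t, ?_, fun i hi => ?_, ?_⟩, himage,
    hMS.existsUnique_intCast_eq hg himage⟩
  · exact hu ▸ gcd_eq_one_of_addOrderOf_zsmul_eq (hu ▸ hd) hg_ord
  · rw [← Pi.single_smul]
    exact Pi.single_eq_of_ne hi _
  · rw [← Pi.single_smul, Pi.single_eq_same, Int.cast_mul, ← Int.natCast_div, Int.cast_natCast,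
      zsmul_eq_mul]

theorem stmt_3 (k : ℕ) (n : Fin (k + 1) → ℕ)
    (h1 : 1 < n 0) (hdvd : ∀ i : Fin k, n i.castSucc ∣ n i.succ)
    (M : Finset ℤ) (S : Finset ((i : Fin (k + 1)) → ZMod (n i)))
    (hCS : ∀ x : (i : Fin (k + 1)) → ZMod (n i),
      ∃! p : ℤ × ((i : Fin (k + 1)) → ZMod (n i)),
        p.1 ∈ M ∧ p.2 ∈ S ∧ p.1 • p.2 = x)
    (m : ℤ) (g : (i : Fin (k + 1)) → ZMod (n i))
    (hm : m ∈ M) (hg : g ∈ S) (h0 : m • g = 0) :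
    (∀ j : Fin (k + 1), j ≠ Fin.last k → Int.gcd m (n j) = 1) ∧
    M.card = Int.gcd m (n (Fin.last k)) ∧
    (∃ y : ℤ, Int.gcd y (Int.gcd m (n (Fin.last k))) = 1 ∧
      (∀ i : Fin (k + 1), i ≠ Fin.last k → g i = 0) ∧
      g (Fin.last k) =
        ((y * ((n (Fin.last k) : ℤ) / (Int.gcd m (n (Fin.last k)) : ℤ)) : ℤ) :
          ZMod (n (Fin.last k)))) ∧
    (Set.image (fun m' : ℤ => m' • g) ↑M = ↑(AddSubgroup.zmultiples g)) ∧
    (∀ r : ZMod (addOrderOf g), ∃! m' : ℤ, m' ∈ M ∧ (m' : ZMod (addOrderOf g)) = r) :=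
  stmt_3_general k n hdvd M S hCS m g hm hg h0
end

section
/- Let n, k be positive integers with k ≥ 4, M a set of positive integers with |M| = k containing {k−3, k−2, k−1, k}, and suppose lcm(k−3, k−2, k−1, k) divides n. Then M does not completely split ℤ_n: there is no S ⊆ ℤ_n such that every element of ℤ_n has a unique representation m·s with m ∈ M, s ∈ S. -/
/-!
Write `n = (k - 1) k c`. A splitting set `S` has `n / k = (k - 1) c` elements, so the row `k • S`
already consists of `(k - 1) c = n / k` multiples of `k`, i.e. of all of them: no other row meets
the multiples of `k`. Hence the `c` multiples of `(k - 1) k` all lie in `k • S`, which forces exactly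
`c` elements of `S` to be divisible by `k - 1`. Counting the `k c` multiples of `k - 1` row by row
now gives a contradiction: the row `(k - 1) • S` contributes `(k - 1) c` of them and each of the
other `k - 1` rows at least `c`, in total `2 (k - 1) c > k c`.
-/

open Finset

theorem ZMod.card_filter_dvd_val {n d : ℕ} [NeZero n] (hd : d ∣ n) :
    #{x : ZMod n | d ∣ x.val} = n / d := by
  have hd0 : 0 < d := Nat.pos_of_dvd_of_pos hd (NeZero.pos n)
  have hval : #{x : ZMod n | d ∣ x.val} = #{k ∈ range n | d ∣ k} :=
    card_nbij' ZMod.val (↑) (fun x hx => by simp_all [ZMod.val_lt])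
      (fun k hk => by simp_all [Nat.mod_eq_of_lt])
      (fun x _ => ZMod.natCast_zmod_val x)
      (fun k hk => ZMod.val_cast_of_lt (mem_range.mp (mem_filter.mp hk).1))
  rw [hval, ← Nat.count_eq_card_filter_range]
  simpa [Nat.modEq_zero_iff_dvd, Nat.mod_eq_zero_of_dvd hd] using Nat.count_modEq_card n hd0 0

theorem ZMod.dvd_val_nsmul_iff {n d : ℕ} (hd : d ∣ n) (m : ℕ) (x : ZMod n) :
    d ∣ (m • x).val ↔ d ∣ m * x.val := by
  rw [nsmul_eq_mul, ZMod.val_mul, Nat.dvd_mod_iff hd, ZMod.val_natCast, Nat.dvd_iff_mod_eq_zero,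
    Nat.dvd_iff_mod_eq_zero, Nat.mul_mod, Nat.mod_mod_of_dvd _ hd, ← Nat.mul_mod]

def CompletelySplits {G : Type*} [AddMonoid G] (M : Finset ℕ) (S : Finset G) : Prop :=
  ∀ x : G, ∃! p : ℕ × G, p.1 ∈ M ∧ p.2 ∈ S ∧ p.1 • p.2 = x

namespace CompletelySplits

section AddMonoid

variable {G : Type*} [AddMonoid G] [Fintype G] {M : Finset ℕ} {S : Finset G}

theorem sum_card_filter (h : CompletelySplits M S) (P : G → Prop) [DecidablePred P] :
    ∑ m ∈ M, #{s ∈ S | P (m • s)} = #{x | P x} := by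
  have hprod : ∑ m ∈ M, #{s ∈ S | P (m • s)} = #{p ∈ M ×ˢ S | P (p.1 • p.2)} := by
    simp only [card_filter, sum_product]
  rw [hprod]
  refine card_bij (fun p _ => p.1 • p.2) (fun p hp => ?_) (fun p hp q hq hpq => ?_) fun x hx => ?_
  · simpa using (mem_filter.mp hp).2
  · simp only [mem_filter, mem_product] at hp hq
    exact (h _).unique ⟨hp.1.1, hp.1.2, rfl⟩ ⟨hq.1.1, hq.1.2, hpq.symm⟩
  · obtain ⟨⟨m, s⟩, ⟨hm, hs, rfl⟩, -⟩ := h x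
    exact ⟨⟨m, s⟩, by simpa [hm, hs] using hx, rfl⟩

theorem card_mul_card (h : CompletelySplits M S) : #M * #S = Fintype.card G := by
  simpa [mul_comm] using h.sum_card_filter fun _ => True

end AddMonoid

section ZMod

variable {n k : ℕ} [NeZero n] {M : Finset ℕ} {S : Finset (ZMod n)}

theorem not_dvd_val_nsmul (h : CompletelySplits M S) (hkM : k ∈ M) (hcard : #M = k)
    (hkn : k ∣ n) {m : ℕ} (hm : m ∈ M) (hmk : m ≠ k) {s : ZMod n} (hs : s ∈ S) :
    ¬ k ∣ (m • s).val := by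
  intro hdvd
  have hk0 : 0 < k := hcard ▸ card_pos.mpr ⟨k, hkM⟩
  have hS : n / k = #S := by
    have hnS := h.card_mul_card
    rw [ZMod.card, hcard] at hnS
    exact Nat.div_eq_of_eq_mul_right hk0 hnS.symm
  have hrow : #{s ∈ S | k ∣ (k • s).val} = #S := by
    rw [filter_true_of_mem fun s _ => (ZMod.dvd_val_nsmul_iff hkn k s).mpr (dvd_mul_right k _)]
  have hsum := h.sum_card_filter fun x => k ∣ x.val
  rw [ZMod.card_filter_dvd_val hkn, ← sum_erase_add _ _ hkM, hrow, hS, add_eq_right,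
    sum_eq_zero_iff] at hsum
  exact (card_pos.mpr ⟨s, mem_filter.mpr ⟨hs, hdvd⟩⟩).ne' (hsum m (mem_erase.mpr ⟨hmk, hm⟩))

theorem card_filter_dvd_val (h : CompletelySplits M S) (hkM : k ∈ M) (hcard : #M = k)
    {d : ℕ} (hdkn : d * k ∣ n) : #{s ∈ S | d ∣ s.val} = n / (d * k) := by
  have hk0 : 0 < k := hcard ▸ card_pos.mpr ⟨k, hkM⟩
  have hsum := h.sum_card_filter fun x => d * k ∣ x.val
  rw [ZMod.card_filter_dvd_val hdkn, ← sum_erase_add _ _ hkM, sum_eq_zero, zero_add] at hsum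
  · rw [← hsum]
    refine congrArg card (filter_congr fun s _ => ?_)
    rw [ZMod.dvd_val_nsmul_iff hdkn, mul_comm k, Nat.mul_dvd_mul_iff_right hk0]
  · intro m hm
    obtain ⟨hmk, hm⟩ := mem_erase.mp hm
    rw [card_eq_zero, filter_eq_empty_iff]
    exact fun s hs hdvd => h.not_dvd_val_nsmul hkM hcard ((dvd_mul_left k d).trans hdkn) hm hmk hs
      ((dvd_mul_left k d).trans hdvd)

end ZMod

end CompletelySplits

theorem ZMod.not_completelySplits {n k : ℕ} [NeZero n] {M : Finset ℕ} (hk : 3 ≤ k)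
    (hcard : #M = k) (hkM : k ∈ M) (hk1M : k - 1 ∈ M) (hn : (k - 1) * k ∣ n)
    (S : Finset (ZMod n)) : ¬ CompletelySplits M S := by
  intro h
  obtain ⟨c, hc⟩ := hn
  have hc0 : 0 < c := Nat.pos_of_ne_zero fun h0 => NeZero.ne n (by rw [hc, h0, mul_zero])
  have hk1n : k - 1 ∣ n := ⟨k * c, by rw [hc, mul_assoc]⟩
  have hS : #S = (k - 1) * c := by
    have hnS := h.card_mul_card
    rw [ZMod.card, hcard] at hnS
    refine Nat.eq_of_mul_eq_mul_left (by omega : 0 < k) ?_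
    rw [hnS, hc]
    ring
  have hthin : #{s ∈ S | k - 1 ∣ s.val} = c := by
    rw [h.card_filter_dvd_val hkM hcard ⟨c, hc⟩, hc, Nat.mul_div_cancel_left _ (Nat.mul_pos (by omega) (by omega))]
  have hrow : #{s ∈ S | k - 1 ∣ ((k - 1) • s).val} = #S := by
    rw [filter_true_of_mem fun s _ =>
      (ZMod.dvd_val_nsmul_iff hk1n (k - 1) s).mpr (dvd_mul_right (k - 1) _)]
  have hrest : (k - 1) * c ≤ ∑ m ∈ M.erase (k - 1), #{s ∈ S | k - 1 ∣ (m • s).val} :=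
    calc (k - 1) * c = ∑ m ∈ M.erase (k - 1), #{s ∈ S | k - 1 ∣ s.val} := by
          rw [sum_const, card_erase_of_mem hk1M, hcard, hthin, smul_eq_mul]
      _ ≤ _ := sum_le_sum fun m _ => card_le_card fun s hs => by
          simp only [mem_filter] at hs ⊢
          exact ⟨hs.1, (ZMod.dvd_val_nsmul_iff hk1n m s).mpr (dvd_mul_of_dvd_right hs.2 m)⟩
  have hsum := h.sum_card_filter fun x => k - 1 ∣ x.val
  have hnk1 : n / (k - 1) = k * c := by rw [hc, mul_assoc, Nat.mul_div_cancel_left _ (by omega)]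
  rw [ZMod.card_filter_dvd_val hk1n, ← sum_erase_add _ _ hk1M, hrow, hS, hnk1] at hsum
  have hkc : (k - 1) * c + c = k * c := by rw [← add_one_mul, Nat.sub_add_cancel (by omega : 1 ≤ k)]
  have h2c : 2 * c ≤ (k - 1) * c := Nat.mul_le_mul_right c (by omega)
  omega

theorem stmt_7_general (n k : ℕ) (hn : 0 < n) (hk : 4 ≤ k)
    (M : Finset ℕ) (hcard : M.card = k)
    (hsub : {k - 3, k - 2, k - 1, k} ⊆ M)
    (hlcm : Nat.lcm (Nat.lcm (k - 3) (k - 2)) (Nat.lcm (k - 1) k) ∣ n) :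
    ¬ ∃ S : Finset (ZMod n), ∀ x : ZMod n,
      ∃! p : ℕ × ZMod n, p.1 ∈ M ∧ p.2 ∈ S ∧ p.1 • p.2 = x := by
  have : NeZero n := ⟨hn.ne'⟩
  have hcop : Nat.Coprime (k - 1) k :=
    (Nat.coprime_self_sub_left (by omega)).mpr (Nat.coprime_one_left k)
  have hdvd : (k - 1) * k ∣ n := hcop.lcm_eq_mul ▸ (Nat.dvd_lcm_right _ _).trans hlcm
  rintro ⟨S, hS⟩
  exact ZMod.not_completelySplits (by omega) hcard (hsub (by simp)) (hsub (by simp)) hdvd S hS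

theorem stmt_7 (n k : ℕ) (hn : 0 < n) (hk : 4 ≤ k)
    (M : Finset ℕ) (hpos : ∀ m ∈ M, 0 < m) (hcard : M.card = k)
    (hsub : {k - 3, k - 2, k - 1, k} ⊆ M)
    (hlcm : Nat.lcm (Nat.lcm (k - 3) (k - 2)) (Nat.lcm (k - 1) k) ∣ n) :
    ¬ ∃ S : Finset (ZMod n), ∀ x : ZMod n,
      ∃! p : ℕ × ZMod n, p.1 ∈ M ∧ p.2 ∈ S ∧ p.1 • p.2 = x :=
  stmt_7_general n k hn hk M hcard hsub hlcm
end

section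
/- Let m, n be coprime positive integers and g an integer coprime to mn. Suppose ord_{mn}(g) = φ(mn)/d where d = gcd(φ(m), φ(n)), ord_m(g) = φ(m)/d₁, and ord_n(g) = φ(n)/d₂. Then d₁·d₂ divides d and gcd(d₁, d₂) = 1. -/
lemma crt_orderOf (m n : ℕ) (hmn : Nat.Coprime m n) (g : ℤ) :
    orderOf ((g : ZMod (m * n))) = Nat.lcm (orderOf (g : ZMod m)) (orderOf (g : ZMod n)) := by
  have e := ZMod.chineseRemainder hmn
  have h : orderOf ((g : ZMod (m*n))) = orderOf (e.toMulEquiv (g : ZMod (m*n))) :=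
    (e.toMulEquiv.orderOf_eq _).symm
  rw [h]
  have h2 : (e.toMulEquiv (g : ZMod (m*n))) = ((g : ZMod m), (g : ZMod n)) := by
    show e (g : ZMod (m*n)) = _
    rw [map_intCast]; rfl
  rw [h2, Prod.orderOf_mk]

theorem stmt_8 (m n : ℕ) (hm : 0 < m) (hn : 0 < n) (hmn : Nat.Coprime m n)
    (g : ℤ) (hg : Int.gcd g (m * n) = 1) (d₁ d₂ : ℕ)
    (hord : Nat.totient (m * n) =
      Nat.gcd (Nat.totient m) (Nat.totient n) * orderOf ((g : ZMod (m * n))))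
    (h1 : Nat.totient m = d₁ * orderOf ((g : ZMod m)))
    (h2 : Nat.totient n = d₂ * orderOf ((g : ZMod n))) :
    d₁ * d₂ ∣ Nat.gcd (Nat.totient m) (Nat.totient n) ∧ Nat.gcd d₁ d₂ = 1 := by
  set a := orderOf ((g : ZMod m)) with ha
  set b := orderOf ((g : ZMod n)) with hb
  have hφm : 0 < Nat.totient m := Nat.totient_pos.2 hm
  have hφn : 0 < Nat.totient n := Nat.totient_pos.2 hn
  have hapos : 0 < a := by
    rcases Nat.eq_zero_or_pos a with h | h
    · rw [h1, h, mul_zero] at hφm; exact absurd hφm (lt_irrefl 0)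
    · exact h
  have hbpos : 0 < b := by
    rcases Nat.eq_zero_or_pos b with h | h
    · rw [h2, h, mul_zero] at hφn; exact absurd hφn (lt_irrefl 0)
    · exact h
  have hgpos : 0 < Nat.gcd a b := Nat.gcd_pos_of_pos_left _ hapos
  have hlpos : 0 < Nat.lcm a b := Nat.lcm_pos hapos hbpos
  -- main equation: (d₁*a)*(d₂*b) = gcd(φm, φn) * lcm a b
  have key : (d₁ * a) * (d₂ * b) = Nat.gcd (d₁ * a) (d₂ * b) * Nat.lcm a b := by
    rw [← h1, ← h2, ← Nat.totient_mul hmn, hord, crt_orderOf m n hmn g, h1, h2]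
  -- gcd(φm,φn) = d₁*d₂*gcd a b
  have hgcd : Nat.gcd (d₁ * a) (d₂ * b) = d₁ * d₂ * Nat.gcd a b := by
    have h3 : (d₁ * a) * (d₂ * b) = (d₁ * d₂ * Nat.gcd a b) * Nat.lcm a b := by
      rw [show d₁ * d₂ * Nat.gcd a b * Nat.lcm a b
          = d₁ * d₂ * (Nat.gcd a b * Nat.lcm a b) from by ring, Nat.gcd_mul_lcm]; ring
    rw [h3] at key
    exact (Nat.eq_of_mul_eq_mul_right hlpos key.symm)
  -- lcm (d₁*a) (d₂*b) = lcm a b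
  have hlcm : Nat.lcm (d₁ * a) (d₂ * b) = Nat.lcm a b := by
    have h4 : Nat.gcd (d₁*a) (d₂*b) * Nat.lcm (d₁*a) (d₂*b)
        = Nat.gcd (d₁*a) (d₂*b) * Nat.lcm a b := by
      rw [Nat.gcd_mul_lcm, key]
    have hd1pos : 0 < d₁ := by
      rcases Nat.eq_zero_or_pos d₁ with h | h
      · rw [h1, h, zero_mul] at hφm; exact absurd hφm (lt_irrefl 0)
      · exact h
    have hd2pos : 0 < d₂ := by
      rcases Nat.eq_zero_or_pos d₂ with h | h
      · rw [h2, h, zero_mul] at hφn; exact absurd hφn (lt_irrefl 0)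
      · exact h
    have hgpos2 : 0 < Nat.gcd (d₁*a) (d₂*b) := by
      rw [hgcd]; positivity
    exact Nat.eq_of_mul_eq_mul_left hgpos2 h4
  have hd1 : d₁ ∣ b / Nat.gcd a b := by
    have : d₁ * a ∣ Nat.lcm a b := hlcm ▸ Nat.dvd_lcm_left _ _
    have h5 : d₁ * a * Nat.gcd a b ∣ a * b := by
      rw [← Nat.gcd_mul_lcm a b]
      exact mul_dvd_mul_right this _ |>.trans (by rw [mul_comm])
    have h6 : d₁ * Nat.gcd a b ∣ b := by
      have : a * (d₁ * Nat.gcd a b) ∣ a * b := by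
        have e : a * (d₁ * Nat.gcd a b) = d₁ * a * Nat.gcd a b := by ring
        rw [e]; exact h5
      exact (mul_dvd_mul_iff_left hapos.ne').mp this
    rw [Nat.dvd_div_iff_mul_dvd (Nat.gcd_dvd_right a b), mul_comm]
    exact h6
  have hd2 : d₂ ∣ a / Nat.gcd a b := by
    have : d₂ * b ∣ Nat.lcm a b := hlcm ▸ Nat.dvd_lcm_right _ _
    have h5 : d₂ * b * Nat.gcd a b ∣ a * b := by
      rw [← Nat.gcd_mul_lcm a b]
      exact mul_dvd_mul_right this _ |>.trans (by rw [mul_comm])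
    have h6 : d₂ * Nat.gcd a b ∣ a := by
      have : b * (d₂ * Nat.gcd a b) ∣ b * a := by
        have e : b * (d₂ * Nat.gcd a b) = d₂ * b * Nat.gcd a b := by ring
        rw [e, mul_comm b a]; exact h5
      exact (mul_dvd_mul_iff_left hbpos.ne').mp this
    rw [Nat.dvd_div_iff_mul_dvd (Nat.gcd_dvd_left a b), mul_comm]
    exact h6
  constructor
  · rw [h1, h2, hgcd]; exact dvd_mul_right _ _
  · have hcop : Nat.Coprime (a / Nat.gcd a b) (b / Nat.gcd a b) :=
      Nat.coprime_div_gcd_div_gcd hgpos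
    exact Nat.Coprime.coprime_dvd_left hd1 (Nat.Coprime.coprime_dvd_right hd2 hcop.symm)
end

section
/- Let m and n be relatively prime positive integers, A = {a₁,...,a_m} and B = {b₁,...,b_n} sets of integers such that the sum set A + B = {aᵢ + bⱼ} is a complete set of representatives modulo mn. Then A is a complete set of residues modulo m and B is a complete set of residues modulo n. -/
/-!
Write `A(x) = ∑_{a ∈ A} x^a` in the group ring `𝔽_p[ℤ/N]`. A tiling `A + B = ℤ/N` means
`A(x) B(x) = J`, the sum of all group elements, and `A(x) J = |A| J`. For a prime `p ∤ |A|`,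
Frobenius gives `A(x^p) B(x) = A(x)^(p-1) J = |A|^(p-1) J = J`, so every element of `ℤ/N` is
represented by `pA + B` a number of times that is `≡ 1 (mod p)`, hence at least once; as
`|A| |B| = N`, exactly once. Iterating, `kA + B` tiles `ℤ/mn` for every `k` coprime to `m = |A|`.
Taking `k = n` and reducing mod `n` kills `nA`, so `B` covers `ℤ/n`, and `|B| = n` makes it a
complete residue system. By symmetry, so is `A` modulo `m`.
-/

open Finset AddMonoidAlgebra

instance AddMonoidAlgebra.charP {R G : Type*} [Semiring R] [AddMonoid G] (p : ℕ) [CharP R p] :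
    CharP (AddMonoidAlgebra R G) p :=
  charP_of_injective_ringHom (f := singleZeroRingHom)
    (fun _ _ h => Finsupp.single_injective (0 : G) (congrArg coeff h)) p

section Tiling

variable {G H α β : Type*} {A : Finset α} {B : Finset β} {f : α → G} {g : β → G}

def IsTiling [Add G] (A : Finset α) (B : Finset β) (f : α → G) (g : β → G) : Prop :=
  ∀ t, ∃! q : α × β, q.1 ∈ A ∧ q.2 ∈ B ∧ f q.1 + g q.2 = t

theorem IsTiling.symm [AddCommMagma G] (h : IsTiling A B f g) : IsTiling B A g f := by
  intro t
  obtain ⟨q, ⟨hq₁, hq₂, hq⟩, huniq⟩ := h t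
  refine ⟨q.swap, ⟨hq₂, hq₁, by rw [← hq, add_comm]; rfl⟩, fun q' ⟨h₁, h₂, h'⟩ => ?_⟩
  rw [← huniq q'.swap ⟨h₂, h₁, by rw [← h', add_comm]; rfl⟩, Prod.swap_swap]

theorem IsTiling.exists_mem_map_eq [AddZeroClass G] [AddZeroClass H] (h : IsTiling A B f g)
    (φ : G →+ H) (hφ : Function.Surjective φ) (hA : ∀ a ∈ A, φ (f a) = 0) (x : H) :
    ∃ b ∈ B, φ (g b) = x := by
  obtain ⟨t, rfl⟩ := hφ x
  obtain ⟨⟨a, b⟩, ⟨ha, hb, hab⟩, -⟩ := h t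
  exact ⟨b, hb, by rw [← hab, map_add, hA a ha, zero_add]⟩

variable [Add G] [DecidableEq G]

theorem isTiling_iff_card_filter_eq_one :
    IsTiling A B f g ↔ ∀ t, #{q ∈ A ×ˢ B | f q.1 + g q.2 = t} = 1 := by
  simp only [IsTiling, ExistsUnique, card_eq_one, eq_singleton_iff_unique_mem, mem_filter,
    mem_product, and_assoc]

variable [Fintype G]

theorem sum_card_filter_add_eq :
    ∑ t : G, #{q ∈ A ×ˢ B | f q.1 + g q.2 = t} = #A * #B := by
  rw [← card_product, card_eq_sum_card_fiberwise (f := fun q : α × β => f q.1 + g q.2) (t := univ)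
    (fun _ _ => mem_coe.2 (mem_univ _))]

theorem IsTiling.card_mul_card (h : IsTiling A B f g) : #A * #B = Fintype.card G := by
  simp [← sum_card_filter_add_eq (f := f) (g := g), isTiling_iff_card_filter_eq_one.1 h]

theorem isTiling_of_one_le_card_filter (hcard : #A * #B = Fintype.card G)
    (hcover : ∀ t, 1 ≤ #{q ∈ A ×ˢ B | f q.1 + g q.2 = t}) : IsTiling A B f g := by
  have hsum : ∑ _t : G, 1 = ∑ t : G, #{q ∈ A ×ˢ B | f q.1 + g q.2 = t} := by
    rw [sum_card_filter_add_eq, hcard, sum_const, card_univ, smul_eq_mul, mul_one]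
  exact isTiling_iff_card_filter_eq_one.2 fun t =>
    ((sum_eq_sum_iff_of_le fun t _ => hcover t).1 hsum t (mem_univ t)).symm

end Tiling

theorem Finset.existsUnique_of_forall_exists_of_card_eq {α H : Type*} [Fintype H] {B : Finset α}
    {g : α → H} (hcover : ∀ x, ∃ b ∈ B, g b = x) (hB : #B = Fintype.card H) (x : H) :
    ∃! b, b ∈ B ∧ g b = x := by
  have hinj : Set.InjOn g B :=
    injOn_of_surjOn_of_card_le (t := univ) g (fun _ _ => mem_coe.2 (mem_univ _))
      (fun x _ => hcover x) (by rw [hB, card_univ])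
  obtain ⟨b, hb, rfl⟩ := hcover x
  exact ⟨b, ⟨hb, rfl⟩, fun b' ⟨hb', he⟩ => hinj hb' hb he⟩

section GroupRing

variable {R G α β : Type*} {A : Finset α} {f : α → G}

variable (R) in
noncomputable def finsetElem [Semiring R] (A : Finset α) (f : α → G) : AddMonoidAlgebra R G :=
  ∑ a ∈ A, single (f a) 1

theorem coeff_finsetElem_mul_finsetElem [Semiring R] [Add G] [DecidableEq G] (B : Finset β)
    (g : β → G) (t : G) :
    (finsetElem R A f * finsetElem R B g).coeff t = #{q ∈ A ×ˢ B | f q.1 + g q.2 = t} := by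
  simp only [finsetElem, sum_mul_sum, single_mul_single, one_mul, ← sum_product', coeff_sum,
    Finset.sum_apply', coeff_single, Finsupp.single_apply]
  rw [sum_boole]

theorem coeff_finsetElem_univ [Semiring R] [Fintype G] [DecidableEq G] (t : G) :
    (finsetElem R univ (id : G → G)).coeff t = 1 := by
  simp [finsetElem, coeff_sum, Finset.sum_apply', coeff_single, Finsupp.single_apply]

theorem IsTiling.finsetElem_mul_finsetElem [Semiring R] [Add G] [Fintype G] [DecidableEq G]
    {B : Finset β} {g : β → G} (h : IsTiling A B f g) :
    finsetElem R A f * finsetElem R B g = finsetElem R univ id := by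
  refine coeff_injective (Finsupp.ext fun t => ?_)
  rw [coeff_finsetElem_mul_finsetElem, coeff_finsetElem_univ,
    isTiling_iff_card_filter_eq_one.1 h t, Nat.cast_one]

section AddGroup

variable [Semiring R] [AddGroup G] [Fintype G]

theorem finsetElem_mul_finsetElem_univ :
    finsetElem R A f * finsetElem R univ id = #A • finsetElem R univ (id : G → G) := by
  have hsingle : ∀ x : G, single x (1 : R) * finsetElem R univ id = finsetElem R univ id := by
    intro x
    simp only [finsetElem, mul_sum, single_mul_single, one_mul, id]
    exact Equiv.sum_comp (Equiv.addLeft x) (fun s => single s 1)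
  rw [finsetElem, sum_mul]
  simp only [hsingle, sum_const]

theorem finsetElem_pow_mul_finsetElem_univ (j : ℕ) :
    finsetElem R A f ^ j * finsetElem R univ id = (#A ^ j) • finsetElem R univ (id : G → G) := by
  induction j with
  | zero => simp
  | succ j ih =>
    rw [pow_succ', mul_assoc, ih, mul_smul_comm, finsetElem_mul_finsetElem_univ, smul_smul,
      pow_succ]

end AddGroup

theorem finsetElem_nsmul_char [CommSemiring R] [AddCommMonoid G] (p : ℕ) [Fact p.Prime]
    [CharP R p] : finsetElem R A (p • f) = finsetElem R A f ^ p := by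
  simp only [finsetElem, sum_pow_char, single_pow, one_pow, Pi.smul_apply]

end GroupRing

section Multiplier

variable {G α β : Type*} [AddCommGroup G] [Fintype G] [DecidableEq G]
  {A : Finset α} {B : Finset β} {f : α → G} {g : β → G}

theorem IsTiling.nsmul_of_prime (h : IsTiling A B f g) {p : ℕ} (hp : p.Prime) (hpA : ¬p ∣ #A) :
    IsTiling A B (p • f) g := by
  have : Fact p.Prime := ⟨hp⟩
  set SA := finsetElem (ZMod p) A f
  have hA : (#A : ZMod p) ^ (p - 1) = 1 :=
    ZMod.pow_card_sub_one_eq_one ((ZMod.natCast_eq_zero_iff _ _).not.2 hpA)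
  have hprod : finsetElem (ZMod p) A (p • f) * finsetElem (ZMod p) B g =
      finsetElem (ZMod p) univ id :=
    calc finsetElem (ZMod p) A (p • f) * finsetElem (ZMod p) B g
        = SA ^ (p - 1) * (SA * finsetElem (ZMod p) B g) := by
          rw [finsetElem_nsmul_char, ← mul_assoc, ← pow_succ, Nat.sub_add_cancel hp.one_le]
      _ = (#A ^ (p - 1)) • finsetElem (ZMod p) univ id := by
          rw [h.finsetElem_mul_finsetElem, finsetElem_pow_mul_finsetElem_univ]
      _ = finsetElem (ZMod p) univ id := by
          rw [← Nat.cast_smul_eq_nsmul (ZMod p), Nat.cast_pow, hA, one_smul]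
  have hcount : ∀ t, (#{q ∈ A ×ˢ B | (p • f) q.1 + g q.2 = t} : ZMod p) = 1 := fun t => by
    rw [← coeff_finsetElem_mul_finsetElem, hprod, coeff_finsetElem_univ]
  refine isTiling_of_one_le_card_filter h.card_mul_card fun t => Nat.one_le_iff_ne_zero.2 ?_
  intro hzero
  exact zero_ne_one (by simpa only [hzero, Nat.cast_zero] using hcount t)

/-- Tijdeman's multiplier theorem. -/
theorem IsTiling.nsmul (h : IsTiling A B f g) {k : ℕ} (hk : k ≠ 0) (hkA : k.Coprime #A) :
    IsTiling A B (k • f) g := by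
  induction k using induction_on_primes with
  | zero => exact absurd rfl hk
  | one => rwa [one_smul]
  | prime_mul p k hp ih =>
    obtain ⟨hpA, hkA⟩ := Nat.coprime_mul_iff_left.1 hkA
    rw [mul_smul]
    exact (ih (right_ne_zero_of_mul hk) hkA).nsmul_of_prime hp ((hp.coprime_iff_not_dvd).1 hpA)

end Multiplier

theorem existsUnique_intCast_of_isTiling {N n : ℕ} [NeZero N] [NeZero n] (hnN : n ∣ N)
    {A B : Finset ℤ} (hnA : n.Coprime #A) (hB : #B = n)
    (h : IsTiling A B (Int.cast : ℤ → ZMod N) Int.cast) (r : ZMod n) :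
    ∃! b, b ∈ B ∧ (b : ZMod n) = r := by
  let φ : ZMod N →+ ZMod n := ZMod.castHom hnN (ZMod n)
  have hφ : ∀ x : ℤ, φ x = x := ZMod.cast_intCast hnN
  have hcover := (h.nsmul (NeZero.ne n) hnA).exists_mem_map_eq φ (ZMod.castHom_surjective hnN)
    fun a _ => by rw [Pi.smul_apply, map_nsmul, hφ, nsmul_eq_mul, ZMod.natCast_self, zero_mul]
  simp only [hφ] at hcover
  exact existsUnique_of_forall_exists_of_card_eq hcover (by rw [hB, ZMod.card]) r

theorem stmt_10 (m n : ℕ) (hm : 0 < m) (hn : 0 < n) (hmn : Nat.Coprime m n)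
    (A B : Finset ℤ) (hA : A.card = m) (hB : B.card = n)
    (hsum : ∀ r : ZMod (m * n), ∃! p : ℤ × ℤ,
      p.1 ∈ A ∧ p.2 ∈ B ∧ ((p.1 + p.2 : ℤ) : ZMod (m * n)) = r) :
    (∀ r : ZMod m, ∃! a : ℤ, a ∈ A ∧ (a : ZMod m) = r) ∧
    (∀ r : ZMod n, ∃! b : ℤ, b ∈ B ∧ (b : ZMod n) = r) := by
  have : NeZero m := ⟨hm.ne'⟩
  have : NeZero n := ⟨hn.ne'⟩
  have h : IsTiling A B (Int.cast : ℤ → ZMod (m * n)) Int.cast := by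
    simpa only [IsTiling, Int.cast_add] using hsum
  exact ⟨existsUnique_intCast_of_isTiling (dvd_mul_right m n) (hB ▸ hmn) hA h.symm,
    existsUnique_intCast_of_isTiling (dvd_mul_left n m) (hA ▸ hmn.symm) hB h⟩
end

section
/- Let G be a finite group with a complete splitting G = MS (M a set of integers, every element of G having a unique representation m·s with m ∈ M, s ∈ S), and let 𝒢 be an M-compatible partition of G. Then for any A ∈ 𝒢, |A| = Σ_{B ∈ 𝒢} |q(A,B)| · |S ∩ B|, where q(A,B) = {m ∈ M : m·B ⊆ A}. -/
theorem stmt_13 {G : Type*} [AddGroup G] [Fintype G] [DecidableEq G]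
    (M : Finset ℤ) (S : Finset G)
    (hCS : ∀ x : G, ∃! p : ℤ × G, p.1 ∈ M ∧ p.2 ∈ S ∧ p.1 • p.2 = x)
    (𝒢 : Finset (Finset G))
    (hnonempty : ∀ A ∈ 𝒢, A.Nonempty)
    (hdisj : ∀ A ∈ 𝒢, ∀ B ∈ 𝒢, A ≠ B → Disjoint A B)
    (hcover : 𝒢.biUnion id = Finset.univ)
    (hcompat : ∀ A ∈ 𝒢, ∀ m ∈ M, ∃ B ∈ 𝒢, ∀ a ∈ A, m • a ∈ B)
    (A : Finset G) (hA : A ∈ 𝒢) :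
    A.card = ∑ B ∈ 𝒢,
      (M.filter (fun m : ℤ => ∀ b ∈ B, m • b ∈ A)).card * (S ∩ B).card := by
  classical
  have hblk : ∀ g : G, ∃ B ∈ 𝒢, g ∈ B := by
    intro g
    have : g ∈ 𝒢.biUnion id := hcover ▸ Finset.mem_univ g
    simpa using this
  set blk : G → Finset G := fun g => (hblk g).choose with hblkdef
  have hblkmem : ∀ g, blk g ∈ 𝒢 := fun g => (hblk g).choose_spec.1
  have hgblk : ∀ g, g ∈ blk g := fun g => (hblk g).choose_spec.2
  have hblk_eq : ∀ g, ∀ B ∈ 𝒢, g ∈ B → blk g = B := by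
    intro g B hB hg
    by_contra h
    exact Finset.disjoint_left.mp (hdisj _ (hblkmem g) B hB h) (hgblk g) hg
  set P := (M ×ˢ S).filter (fun p => p.1 • p.2 ∈ A) with hP
  have h1 : P.card = A.card := by
    apply Finset.card_bij (fun p _ => p.1 • p.2)
    · intro p hp; exact (Finset.mem_filter.mp hp).2
    · intro p hp q hq h
      have hp' := Finset.mem_filter.mp hp
      have hq' := Finset.mem_filter.mp hq
      obtain ⟨hp1, hp2⟩ := Finset.mem_product.mp hp'.1
      obtain ⟨hq1, hq2⟩ := Finset.mem_product.mp hq'.1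
      obtain ⟨r, hr, hu⟩ := hCS (p.1 • p.2)
      have e1 := hu p ⟨hp1, hp2, rfl⟩
      have e2 := hu q ⟨hq1, hq2, h.symm⟩
      rw [e1, e2]
    · intro a ha
      obtain ⟨p, ⟨hm, hs, he⟩, _⟩ := hCS a
      exact ⟨p, Finset.mem_filter.mpr ⟨Finset.mem_product.mpr ⟨hm, hs⟩, he ▸ ha⟩, he⟩
  rw [← h1]
  rw [Finset.card_eq_sum_card_fiberwise (f := fun p => blk p.2) (t := 𝒢)
    (fun p _ => hblkmem p.2)]
  apply Finset.sum_congr rfl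
  intro B hB
  have hset : P.filter (fun p => blk p.2 = B)
      = (M.filter (fun m : ℤ => ∀ b ∈ B, m • b ∈ A)) ×ˢ (S ∩ B) := by
    ext p
    simp only [Finset.mem_filter, Finset.mem_product, Finset.mem_inter, hP]
    constructor
    · rintro ⟨⟨⟨hm, hs⟩, hmsA⟩, hblkB⟩
      have hsB : p.2 ∈ B := hblkB ▸ hgblk p.2
      obtain ⟨C, hC, hCall⟩ := hcompat B hB p.1 hm
      have hCA : C = A := by
        by_contra h
        exact Finset.disjoint_left.mp (hdisj C hC A hA h) (hCall p.2 hsB) hmsA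
      exact ⟨⟨hm, hCA ▸ hCall⟩, hs, hsB⟩
    · rintro ⟨⟨hm, hall⟩, hs, hsB⟩
      exact ⟨⟨⟨hm, hs⟩, hall p.2 hsB⟩, hblk_eq p.2 B hB hsB⟩
  rw [hset, Finset.card_product]
end

section
/- Let G be a finite group and 𝒢 an M-partition of G (an M-compatible partition on which the divisibility relation is a partial order). If for every g ∈ G, M contains an element m relatively prime to the order of g, then for every class A ∈ 𝒢, the set q(A,A) = {m ∈ M : m·A ⊆ A} is nonempty. -/
theorem stmt_14 {G : Type*} [AddGroup G] [Fintype G] [DecidableEq G]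
    (M : Finset ℤ) (𝒢 : Finset (Finset G))
    (hnonempty : ∀ A ∈ 𝒢, A.Nonempty)
    (hdisj : ∀ A ∈ 𝒢, ∀ B ∈ 𝒢, A ≠ B → Disjoint A B)
    (hcover : 𝒢.biUnion id = Finset.univ)
    (hcompat : ∀ A ∈ 𝒢, ∀ m ∈ M, ∃ B ∈ 𝒢, ∀ a ∈ A, m • a ∈ B)
    (hantisymm : ∀ A ∈ 𝒢, ∀ B ∈ 𝒢,
      (∃ n ∈ Submonoid.closure (M : Set ℤ), ∀ b ∈ B, n • b ∈ A) →
      (∃ n ∈ Submonoid.closure (M : Set ℤ), ∀ a ∈ A, n • a ∈ B) → A = B)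
    (hcop : ∀ g : G, ∃ m ∈ M, Nat.Coprime m.natAbs (addOrderOf g)) :
    ∀ A ∈ 𝒢, ∃ m ∈ M, ∀ a ∈ A, m • a ∈ A := by
  intro A hA
  obtain ⟨a₀, ha₀⟩ := hnonempty A hA
  obtain ⟨m, hmM, hmcop⟩ := hcop a₀
  -- iterate: for any class C and k, m^k maps C into some class
  have iter : ∀ (k : ℕ), ∀ C ∈ 𝒢, ∃ B ∈ 𝒢, ∀ c ∈ C, (m ^ k) • c ∈ B := by
    intro k
    induction k with
    | zero => intro C hC; exact ⟨C, hC, fun c hc => by simpa using hc⟩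
    | succ k ih =>
      intro C hC
      obtain ⟨B, hB, hCB⟩ := hcompat C hC m hmM
      obtain ⟨D, hD, hBD⟩ := ih B hB
      refine ⟨D, hD, fun c hc => ?_⟩
      have h1 : (m ^ (k + 1)) • c = (m ^ k) • (m • c) := by
        rw [pow_succ, mul_zsmul]
      rw [h1]
      exact hBD _ (hCB c hc)
  -- find t ≥ 1 with m ^ t • a₀ = a₀
  set n := addOrderOf a₀ with hn
  have hnpos : 0 < n := addOrderOf_pos a₀
  haveI : NeZero n := ⟨hnpos.ne'⟩
  have hu : IsUnit (m : ZMod n) := by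
    have h1 : IsUnit ((m.natAbs : ℤ) : ZMod n) := by
      rw [Int.cast_natCast]
      exact (ZMod.isUnit_iff_coprime _ _).mpr hmcop
    rcases Int.natAbs_eq m with h | h
    · rw [h]; exact h1
    · rw [h, Int.cast_neg]; exact h1.neg
  set t : ℕ := orderOf hu.unit with ht
  have htpos : 0 < t := orderOf_pos _
  have hpow : (m : ZMod n) ^ t = 1 := by
    have := pow_orderOf_eq_one hu.unit
    have h2 : ((hu.unit : (ZMod n)ˣ) : ZMod n) ^ t = ((1 : (ZMod n)ˣ) : ZMod n) := by
      rw [← Units.val_pow_eq_pow_val, this]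
    simpa [IsUnit.unit_spec] using h2
  have hta : (m ^ t) • a₀ = a₀ := by
    have hdvd : (n : ℤ) ∣ m ^ t - 1 := by
      have : ((m ^ t - 1 : ℤ) : ZMod n) = 0 := by push_cast [hpow]; ring
      exact (ZMod.intCast_zmod_eq_zero_iff_dvd _ _).mp this
    have h0 : (m ^ t - 1) • a₀ = 0 := addOrderOf_dvd_iff_zsmul_eq_zero.mp hdvd
    have h2 := sub_zsmul a₀ (m ^ t) 1
    rw [h0, one_zsmul] at h2
    have := h2.symm
    rw [add_neg_eq_zero] at this
    exact this
  obtain ⟨B₁, hB₁, hAB₁⟩ := hcompat A hA m hmM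
  obtain ⟨B', hB', hB₁B'⟩ := iter (t - 1) B₁ hB₁
  have key : (m ^ (t - 1)) • (m • a₀) = a₀ := by
    have h3 : (m ^ (t - 1) * m) • a₀ = a₀ := by
      rw [← pow_succ, Nat.sub_add_cancel htpos]; exact hta
    rw [mul_zsmul] at h3; exact h3
  have ha₀B' : a₀ ∈ B' := by
    have := hB₁B' _ (hAB₁ a₀ ha₀)
    rwa [key] at this
  have hB'A : B' = A := by
    by_contra hne
    exact Finset.disjoint_left.mp (hdisj B' hB' A hA hne) ha₀B' ha₀
  have hmem : m ∈ Submonoid.closure (M : Set ℤ) := Submonoid.subset_closure hmM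
  have hAeq : A = B₁ := by
    apply hantisymm A hA B₁ hB₁
    · exact ⟨m ^ (t - 1), pow_mem hmem _, fun b hb => hB'A ▸ hB₁B' b hb⟩
    · exact ⟨m, hmem, hAB₁⟩
  refine ⟨m, hmM, fun a ha => ?_⟩
  rw [hAeq] at ha ⊢
  exact hAB₁ a (hAeq ▸ ha)
end

section
/- Let G be a finite group and M a set of integers. If there exists g ∈ G such that no element of M is relatively prime to the order of g, then M does not completely split G: there is no S ⊆ G with every element of G having a unique representation m·s, m ∈ M, s ∈ S. -/
theorem stmt_15 {G : Type*} [AddGroup G] [Fintype G]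
    (M : Finset ℤ)
    (h : ∃ g : G, ∀ m ∈ M, ¬ Nat.Coprime m.natAbs (addOrderOf g)) :
    ¬ ∃ S : Finset G, ∀ x : G,
      ∃! p : ℤ × G, p.1 ∈ M ∧ p.2 ∈ S ∧ p.1 • p.2 = x := by
  classical
  rintro ⟨S, hS⟩
  obtain ⟨g0, hg0⟩ := h
  -- pick a witness with maximal addOrderOf
  set P : G → Prop := fun x => ∀ m ∈ M, ¬ Nat.Coprime m.natAbs (addOrderOf x) with hP
  obtain ⟨g, hgmem, hgmax⟩ := Finset.exists_max_image (Finset.univ.filter P) addOrderOf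
    ⟨g0, Finset.mem_filter.2 ⟨Finset.mem_univ _, hg0⟩⟩
  have hg : P g := (Finset.mem_filter.1 hgmem).2
  -- get a representation g = m • s
  obtain ⟨⟨m, s⟩, ⟨hmM, _, hms⟩, -⟩ := hS g
  dsimp only at hms
  -- prime dividing gcd
  have hncop := hg m hmM
  obtain ⟨p, hp, hpd⟩ := Nat.exists_prime_and_dvd hncop
  have hpm : (p : ℤ) ∣ m := by
    have h1 := hpd.trans (Nat.gcd_dvd_left _ _)
    exact (Int.natCast_dvd_natCast.2 h1).trans (Int.natAbs_dvd.2 dvd_rfl)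
  have hpg : p ∣ addOrderOf g := hpd.trans (Nat.gcd_dvd_right _ _)
  have h0 : addOrderOf s • s = 0 := addOrderOf_nsmul_eq_zero s
  have hgs : addOrderOf g ∣ addOrderOf s := by
    apply addOrderOf_dvd_iff_nsmul_eq_zero.2
    rw [← hms, ← natCast_zsmul, ← mul_zsmul', mul_zsmul, natCast_zsmul, h0, smul_zero]
  have hps : p ∣ addOrderOf s := hpg.trans hgs
  have hspos : 0 < addOrderOf s := addOrderOf_pos s
  set n := addOrderOf s
  set k := n / p with hk
  have hkp : k * p = n := Nat.div_mul_cancel hps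
  obtain ⟨m', hm'⟩ := hpm
  have hkg : k • g = 0 := by
    rw [← hms, ← natCast_zsmul, ← mul_zsmul']
    have heq : m * (k : ℤ) = m' * (n : ℤ) := by
      rw [hm', ← hkp]; push_cast; ring
    rw [heq, mul_zsmul, natCast_zsmul, h0, smul_zero]
  have hdvd : addOrderOf g ∣ k := addOrderOf_dvd_iff_nsmul_eq_zero.2 hkg
  have hkpos : 0 < k := Nat.div_pos (Nat.le_of_dvd hspos hps) hp.pos
  have hlt : addOrderOf g < n :=
    lt_of_le_of_lt (Nat.le_of_dvd hkpos hdvd) (Nat.div_lt_self hspos hp.one_lt)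
  -- s also satisfies P, contradicting maximality
  have hPs : P s := fun m' hm' hc => hg m' hm' (hc.coprime_dvd_right hgs)
  exact absurd (hgmax s (Finset.mem_filter.2 ⟨Finset.mem_univ _, hPs⟩)) (not_le.2 hlt)
end

section
/- Let H be a normal subgroup of a finite group G. Suppose M is a set of integers such that M completely splits G (G = MS: every element of G has a unique representation m·s) and M splits G/H (every nonzero element of G/H has a unique representation m·t with t in some T ⊆ G/H, and 0 has no such representation). Then H = M·(S ∩ H) is a complete splitting of H: every element of H has a unique representation m·s with m ∈ M, s ∈ S ∩ H. -/
/-!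
Write `Q = G ⧸ H` and `⟨q⟩` for the cyclic subgroup generated by `q`. For a nonzero cyclic
subgroup `C` of `Q`, counting the pairs `(m, s) ∈ M × S` with `⟨m • s̄⟩ = C` through `G = M • S`,
and the pairs `(m, t) ∈ M × T` with `⟨m • t⟩ = C` through the splitting of `Q`, gives two systems
of linear equations which agree up to the factor `|H|`. Since `⟨m • q⟩ ≤ ⟨q⟩`, and every nonzero
`q` has a multiplier `m ∈ M` with `⟨m • q⟩ = ⟨q⟩`, these systems are triangular with nonzero
diagonal. Hence for each nonzero cyclic `C` there are `|H|` times as many `s ∈ S` with `⟨s̄⟩ = C`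
as `t ∈ T` with `⟨t⟩ = C`. So if `x = m • s ∈ H` with `s ∉ H`, some `t ∈ T` generates `⟨s̄⟩`,
and then `m • t = 0`, which the splitting forbids.
-/

open Finset AddSubgroup

section ZMultiples

variable {Q : Type*} [AddGroup Q]

lemma zsmul_mem_zmultiples_zsmul (m : ℤ) {y z : Q} (h : z ∈ zmultiples y) :
    m • z ∈ zmultiples (m • y) := by
  obtain ⟨k, rfl⟩ := mem_zmultiples_iff.mp h
  exact mem_zmultiples_iff.mpr ⟨k, zsmul_comm y m k⟩

lemma zmultiples_zsmul_le (m : ℤ) (y : Q) : zmultiples (m • y) ≤ zmultiples y :=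
  zmultiples_le_of_mem (zsmul_mem (mem_zmultiples y) m)

lemma zmultiples_zsmul_congr {y y' : Q} (h : zmultiples y = zmultiples y') (m : ℤ) :
    zmultiples (m • y) = zmultiples (m • y') :=
  le_antisymm (zmultiples_le_of_mem (zsmul_mem_zmultiples_zsmul m (h ▸ mem_zmultiples y)))
    (zmultiples_le_of_mem (zsmul_mem_zmultiples_zsmul m (h.symm ▸ mem_zmultiples y')))

lemma zmultiples_zsmul_eq_of_mem {m : ℤ} {t y : Q} (ht : zmultiples (m • t) = zmultiples t)
    (hy : y ∈ zmultiples t) : zmultiples (m • y) = zmultiples y := by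
  obtain ⟨k, rfl⟩ := mem_zmultiples_iff.mp hy
  refine le_antisymm (zmultiples_zsmul_le m _) (zmultiples_le_of_mem ?_)
  rw [zsmul_comm]
  exact zsmul_mem_zmultiples_zsmul k (ht ▸ mem_zmultiples t)

lemma zsmul_eq_zero_of_mem_zmultiples {m : ℤ} {y t : Q} (hy : m • y = 0)
    (ht : t ∈ zmultiples y) : m • t = 0 := by
  obtain ⟨k, rfl⟩ := mem_zmultiples_iff.mp ht
  rw [zsmul_comm, hy, smul_zero]

/-- A generator of a maximal cyclic subgroup above `⟨y⟩` is some `m • t`; maximality forces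
`⟨m • t⟩ = ⟨t⟩`, so `m` acts invertibly on `⟨t⟩ ∋ y`. -/
theorem exists_zmultiples_zsmul_eq_zmultiples [Finite Q] {M : Finset ℤ}
    (hM : ∀ x : Q, x ≠ 0 → ∃ m ∈ M, ∃ t, m • t = x) {y : Q} (hy : y ≠ 0) :
    ∃ m ∈ M, zmultiples (m • y) = zmultiples y := by
  obtain ⟨_, hyc, ⟨c, rfl⟩, hmax⟩ :=
    (Set.finite_range (zmultiples : Q → AddSubgroup Q)).exists_le_maximal (Set.mem_range_self y)
  have hc : c ≠ 0 := by
    rintro rfl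
    exact hy (by simpa using hyc (mem_zmultiples y))
  obtain ⟨m, hm, t, rfl⟩ := hM c hc
  have ht : zmultiples (m • t) = zmultiples t :=
    le_antisymm (zmultiples_zsmul_le m t) (hmax ⟨t, rfl⟩ (zmultiples_zsmul_le m t))
  exact ⟨m, hm, zmultiples_zsmul_eq_of_mem ht (ht.le (hyc (mem_zmultiples y)))⟩

end ZMultiples

section Counting

theorem Finset.sum_comp_eq_sum_card_fiber_mul {ι κ : Type*} [Fintype κ] [DecidableEq κ]
    (s : Finset ι) (g : ι → κ) (φ : κ → ℕ) :
    ∑ i ∈ s, φ (g i) = ∑ k, #{i ∈ s | g i = k} * φ k := by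
  rw [← sum_fiberwise' s g φ]
  simp only [sum_const, smul_eq_mul]

theorem Finset.sum_mul_eq_sum_mul_of_sum_fiber_eq {ι κ R : Type*}
    [NonUnitalNonAssocSemiring R] [DecidableEq κ] {s : Finset ι} {g : ι → κ} {F F' φ : ι → R}
    (hφ : ∀ i ∈ s, ∀ j ∈ s, g i = g j → φ i = φ j)
    (hF : ∀ i ∈ s, ∑ j ∈ s with g j = g i, F j = ∑ j ∈ s with g j = g i, F' j) :
    ∑ i ∈ s, F i * φ i = ∑ i ∈ s, F' i * φ i := by
  rw [← sum_fiberwise_of_maps_to (fun i hi ↦ mem_image_of_mem g hi) (fun i ↦ F i * φ i),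
    ← sum_fiberwise_of_maps_to (fun i hi ↦ mem_image_of_mem g hi) (fun i ↦ F' i * φ i)]
  refine sum_congr rfl fun k hk ↦ ?_
  obtain ⟨i, hi, rfl⟩ := mem_image.mp hk
  have hconst (E : ι → R) :
      ∑ j ∈ s with g j = g i, E j * φ j = (∑ j ∈ s with g j = g i, E j) * φ i := by
    rw [sum_mul]
    refine sum_congr rfl fun j hj ↦ ?_
    obtain ⟨hj, hji⟩ := mem_filter.mp hj
    rw [hφ j hj i hi hji]
  rw [hconst, hconst, hF i hi]

variable {R X : Type*} [SMul R X] [Fintype X]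

theorem sum_card_filter_smul_eq_card (M : Finset R) (S : Finset X) (P : X → Prop)
    [DecidablePred P] (hsplit : ∀ x, P x → ∃! p : R × X, p.1 ∈ M ∧ p.2 ∈ S ∧ p.1 • p.2 = x) :
    ∑ s ∈ S, #{m ∈ M | P (m • s)} = #{x | P x} := by
  have hpairs : ∑ s ∈ S, #{m ∈ M | P (m • s)} = #{p ∈ M ×ˢ S | P (p.1 • p.2)} := by
    simp only [card_filter, sum_product_right]
  rw [hpairs]
  refine card_bij (fun p _ ↦ p.1 • p.2) (fun p hp ↦ by simpa using (mem_filter.mp hp).2) ?_ ?_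
  · intro p hp q hq hpq
    simp only [mem_filter, mem_product] at hp hq
    exact (hsplit _ hp.2).unique ⟨hp.1.1, hp.1.2, rfl⟩ ⟨hq.1.1, hq.1.2, hpq.symm⟩
  · intro x hx
    obtain ⟨p, ⟨hm, hs, rfl⟩, -⟩ := hsplit x (mem_filter.mp hx).2
    exact ⟨p, mem_filter.mpr ⟨mem_product.mpr ⟨hm, hs⟩, (mem_filter.mp hx).2⟩, rfl⟩

theorem card_filter_mk_eq_card_mul {G : Type*} [AddGroup G] [Fintype G] (H : AddSubgroup G)
    [Fintype (G ⧸ H)] (P : G ⧸ H → Prop) [DecidablePred P] :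
    #{x : G | P x} = Nat.card H * #{d : G ⧸ H | P d} := by
  have := Nat.card_congr (QuotientAddGroup.preimageMkEquivAddSubgroupProdSet H {d | P d})
  rw [Nat.card_prod] at this
  simpa [Nat.card_eq_fintype_card, Fintype.card_subtype] using this

end Counting

section Triangular

open scoped Classical

variable {Q : Type*} [AddGroup Q] {M : Finset ℤ}

lemma card_filter_zmultiples_zsmul_eq_zero {c d : Q} (h : ¬zmultiples c ≤ zmultiples d) :
    #{m ∈ M | zmultiples (m • d) = zmultiples c} = 0 := by
  rw [card_eq_zero, filter_eq_empty_iff]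
  exact fun m _ hm ↦ h (hm ▸ zmultiples_zsmul_le m d)

variable [Fintype Q]

theorem sum_mul_card_zmultiples_zsmul_eq (F : Q → ℕ) (c : Q) :
    ∑ d, F d * #{m ∈ M | zmultiples (m • d) = zmultiples c}
      = (∑ d with zmultiples d = zmultiples c, F d) * #{m ∈ M | zmultiples (m • c) = zmultiples c}
        + ∑ d with zmultiples c < zmultiples d,
            F d * #{m ∈ M | zmultiples (m • d) = zmultiples c} := by
  rw [← sum_filter_add_sum_filter_not univ (fun d ↦ zmultiples d = zmultiples c), sum_mul]
  congr 1
  · refine sum_congr rfl fun d hd ↦ ?_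
    simp only [zmultiples_zsmul_congr (mem_filter.mp hd).2]
  · refine (sum_subset (fun d hd ↦ ?_) fun d hd hd' ↦ ?_).symm
    · simp only [mem_filter, mem_univ, true_and] at hd ⊢
      exact hd.ne'
    · simp only [mem_filter, mem_univ, true_and] at hd hd'
      rw [card_filter_zmultiples_zsmul_eq_zero fun hle ↦ hd' (lt_of_le_of_ne hle (Ne.symm hd)),
        mul_zero]

theorem sum_zmultiples_eq_of_sum_mul_card_eq
    (hM : ∀ y : Q, y ≠ 0 → ∃ m ∈ M, zmultiples (m • y) = zmultiples y) {F F' : Q → ℕ}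
    (h : ∀ C ≠ ⊥, ∑ d, F d * #{m ∈ M | zmultiples (m • d) = C}
      = ∑ d, F' d * #{m ∈ M | zmultiples (m • d) = C})
    (C : AddSubgroup Q) (hC : C ≠ ⊥) :
    ∑ d with zmultiples d = C, F d = ∑ d with zmultiples d = C, F' d := by
  induction C using WellFoundedGT.induction with
  | _ C ih =>
  by_cases hcyc : ∃ c, zmultiples c = C
  swap
  · push Not at hcyc
    simp [filter_eq_empty_iff.mpr fun d _ ↦ hcyc d]
  obtain ⟨c, rfl⟩ := hcyc
  have hc : c ≠ 0 := fun hc ↦ hC (by simp [hc])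
  have habove : ∑ d with zmultiples c < zmultiples d,
        F d * #{m ∈ M | zmultiples (m • d) = zmultiples c}
      = ∑ d with zmultiples c < zmultiples d,
        F' d * #{m ∈ M | zmultiples (m • d) = zmultiples c} := by
    refine sum_mul_eq_sum_mul_of_sum_fiber_eq (g := zmultiples)
      (fun i _ j _ hij ↦ by simp only [zmultiples_zsmul_congr hij]) fun i hi ↦ ?_
    have hci := (mem_filter.mp hi).2
    rw [filter_filter, filter_congr fun d _ ↦ and_iff_right_of_imp fun hd ↦ hd ▸ hci]
    exact ih _ hci (ne_bot_of_gt hci)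
  have hpos : 0 < #{m ∈ M | zmultiples (m • c) = zmultiples c} := by
    obtain ⟨m, hm, hmc⟩ := hM c hc
    exact card_pos.mpr ⟨m, mem_filter.mpr ⟨hm, hmc⟩⟩
  have := h _ hC
  rw [sum_mul_card_zmultiples_zsmul_eq, sum_mul_card_zmultiples_zsmul_eq, habove] at this
  exact Nat.eq_of_mul_eq_mul_right hpos (Nat.add_right_cancel this)

end Triangular

section Splitting

open scoped Classical

theorem sum_card_mul_card_zmultiples_zsmul_of_splitting {Q : Type*} [AddGroup Q] [Fintype Q]
    [DecidableEq Q] {M : Finset ℤ} {T : Finset Q}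
    (hT : ∀ x : Q, x ≠ 0 → ∃! p : ℤ × Q, p.1 ∈ M ∧ p.2 ∈ T ∧ p.1 • p.2 = x)
    {C : AddSubgroup Q} (hC : C ≠ ⊥) :
    ∑ d, #{t ∈ T | t = d} * #{m ∈ M | zmultiples (m • d) = C} = #{d : Q | zmultiples d = C} := by
  rw [← sum_card_filter_smul_eq_card M T _ fun x hx ↦ hT x fun hx0 ↦ hC (by simp [← hx, hx0])]
  exact (sum_comp_eq_sum_card_fiber_mul T id _).symm

variable {G : Type*} [AddGroup G] [Fintype G] {H : AddSubgroup G} [H.Normal] [Fintype (G ⧸ H)]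
  {M : Finset ℤ} {S : Finset G}

theorem sum_card_mul_card_zmultiples_zsmul_mk_of_complete_splitting
    (hS : ∀ x : G, ∃! p : ℤ × G, p.1 ∈ M ∧ p.2 ∈ S ∧ p.1 • p.2 = x) (C : AddSubgroup (G ⧸ H)) :
    ∑ d, #{s ∈ S | ((s : G) : G ⧸ H) = d} * #{m ∈ M | zmultiples (m • d) = C}
      = Nat.card H * #{d : G ⧸ H | zmultiples d = C} := by
  rw [← sum_comp_eq_sum_card_fiber_mul S ((↑) : G → G ⧸ H),
    ← card_filter_mk_eq_card_mul H (fun d ↦ zmultiples d = C),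
    ← sum_card_filter_smul_eq_card M S (fun x : G ↦ zmultiples (x : G ⧸ H) = C) fun x _ ↦ hS x]
  simp only [QuotientAddGroup.mk_zsmul]
  congr!

theorem card_filter_zmultiples_mk_eq_card_mul
    (hS : ∀ x : G, ∃! p : ℤ × G, p.1 ∈ M ∧ p.2 ∈ S ∧ p.1 • p.2 = x) {T : Finset (G ⧸ H)}
    (hT : ∀ x : G ⧸ H, x ≠ 0 → ∃! p : ℤ × (G ⧸ H), p.1 ∈ M ∧ p.2 ∈ T ∧ p.1 • p.2 = x)
    {C : AddSubgroup (G ⧸ H)} (hC : C ≠ ⊥) :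
    #{s ∈ S | zmultiples ((s : G) : G ⧸ H) = C} = Nat.card H * #{t ∈ T | zmultiples t = C} := by
  have hM (y : G ⧸ H) (hy : y ≠ 0) : ∃ m ∈ M, zmultiples (m • y) = zmultiples y :=
    exists_zmultiples_zsmul_eq_zmultiples
      (fun x hx ↦ (hT x hx).exists.elim fun p hp ↦ ⟨p.1, hp.1, p.2, hp.2.2⟩) hy
  have hsystem (C : AddSubgroup (G ⧸ H)) (hC : C ≠ ⊥) :
      ∑ d, #{s ∈ S | ((s : G) : G ⧸ H) = d} * #{m ∈ M | zmultiples (m • d) = C}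
        = ∑ d, Nat.card H * #{t ∈ T | t = d} * #{m ∈ M | zmultiples (m • d) = C} := by
    simp_rw [mul_assoc, ← mul_sum]
    rw [sum_card_mul_card_zmultiples_zsmul_mk_of_complete_splitting hS,
      sum_card_mul_card_zmultiples_zsmul_of_splitting hT hC]
  have key := sum_zmultiples_eq_of_sum_mul_card_eq hM hsystem C hC
  rw [← mul_sum, sum_card_fiberwise_eq_card_filter, sum_card_fiberwise_eq_card_filter] at key
  simpa using key

end Splitting

theorem stmt_16 {G : Type*} [AddGroup G] [Fintype G]
    (H : AddSubgroup G) [H.Normal]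
    (M : Finset ℤ) (S : Finset G)
    (hCS : ∀ x : G, ∃! p : ℤ × G, p.1 ∈ M ∧ p.2 ∈ S ∧ p.1 • p.2 = x)
    (hsplit : ∃ T : Finset (G ⧸ H),
      (∀ x : G ⧸ H, x ≠ 0 →
        ∃! p : ℤ × (G ⧸ H), p.1 ∈ M ∧ p.2 ∈ T ∧ p.1 • p.2 = x) ∧
      ¬ ∃ m ∈ M, ∃ t ∈ T, m • t = (0 : G ⧸ H)) :
    ∀ x : G, x ∈ H →
      ∃! p : ℤ × G, p.1 ∈ M ∧ p.2 ∈ S ∧ p.2 ∈ H ∧ p.1 • p.2 = x := by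
  classical
  obtain ⟨T, hT, hT0⟩ := hsplit
  have := Fintype.ofFinite (G ⧸ H)
  intro x hx
  obtain ⟨⟨m, s⟩, ⟨hm, hs, rfl⟩, huniq⟩ := hCS x
  refine ⟨(m, s), ⟨hm, hs, ?_, rfl⟩, fun q hq ↦ huniq q ⟨hq.1, hq.2.1, hq.2.2.2⟩⟩
  by_contra hsH
  have hs0 : (s : G ⧸ H) ≠ 0 := mt (QuotientAddGroup.eq_zero_iff s).mp hsH
  have hms : m • (s : G ⧸ H) = 0 := by
    rwa [← QuotientAddGroup.mk_zsmul, QuotientAddGroup.eq_zero_iff]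
  have hcount := card_filter_zmultiples_mk_eq_card_mul hCS hT (C := zmultiples (s : G ⧸ H))
    (by simpa using hs0)
  have hpos : 0 < #{s' ∈ S | zmultiples ((s' : G) : G ⧸ H) = zmultiples (s : G ⧸ H)} :=
    card_pos.mpr ⟨s, mem_filter.mpr ⟨hs, rfl⟩⟩
  rw [hcount] at hpos
  obtain ⟨t, ht⟩ := card_pos.mp (Nat.pos_of_mul_pos_left hpos)
  obtain ⟨htT, hts⟩ := mem_filter.mp ht
  exact hT0 ⟨m, hm, t, htT, zsmul_eq_zero_of_mem_zmultiples hms (hts ▸ mem_zmultiples t)⟩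
end

section
/- Let G be a finite abelian group and G = MS a complete splitting with 0 = m·g, m ∈ M, g ∈ S, and let H ≤ G be a subgroup with g ∉ H. Then M does not split G/H; i.e., there is no T ⊆ G/H such that every nonzero element of G/H has a unique representation m'·t with m' ∈ M, t ∈ T and 0 has no such representation. -/
theorem stmt_19 {G : Type*} [AddCommGroup G] [Fintype G]
    (M : Finset ℤ) (S : Finset G)
    (hCS : ∀ x : G, ∃! p : ℤ × G, p.1 ∈ M ∧ p.2 ∈ S ∧ p.1 • p.2 = x)
    (m : ℤ) (g : G) (hm : m ∈ M) (hg : g ∈ S) (h0 : m • g = 0)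
    (H : AddSubgroup G) (hgH : g ∉ H) :
    ¬ ∃ T : Finset (G ⧸ H),
      (∀ x : G ⧸ H, x ≠ 0 →
        ∃! p : ℤ × (G ⧸ H), p.1 ∈ M ∧ p.2 ∈ T ∧ p.1 • p.2 = x) ∧
      ¬ ∃ m' ∈ M, ∃ t ∈ T, m' • t = (0 : G ⧸ H) := by
  classical
  rintro ⟨T, hT, hT0⟩
  -- uniqueness of representations, in convenient form
  have key : ∀ (b₁ : ℤ) (s₁ : G) (b₂ : ℤ) (s₂ : G), b₁ ∈ M → s₁ ∈ S → b₂ ∈ M → s₂ ∈ S →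
      b₁ • s₁ = b₂ • s₂ → (b₁, s₁) = ((b₂, s₂) : ℤ × G) := by
    intro b₁ s₁ b₂ s₂ h1 h2 h3 h4 heq
    exact (hCS (b₂ • s₂)).unique ⟨h1, h2, heq⟩ ⟨h3, h4, rfl⟩
  set N := addOrderOf g with hNdef
  have hNpos : 0 < N := addOrderOf_pos g
  have hNg : N • g = 0 := addOrderOf_nsmul_eq_zero g
  -- the "kernel" of multiplication by m, as a Finset
  set K : Finset G := Finset.univ.filter (fun x : G => m • x = 0) with hKdef
  -- (1) |M| ≤ N
  have h1 : M.card ≤ N := by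
    have hinj : Set.InjOn (fun b : ℤ => b • g) ↑M := by
      intro b hb b' hb' h
      have := key b g b' g hb hg hb' hg h
      exact (Prod.ext_iff.mp this).1
    have hcard : (M.image fun b : ℤ => b • g).card = M.card :=
      Finset.card_image_of_injOn hinj
    have hsub : (M.image fun b : ℤ => b • g) ⊆ (Finset.range N).image (fun c : ℕ => c • g) := by
      intro x hx
      obtain ⟨b, hb, rfl⟩ := Finset.mem_image.mp hx
      refine Finset.mem_image.mpr ⟨(b % (N : ℤ)).toNat, ?_, ?_⟩
      · refine Finset.mem_range.mpr ?_
        have h₁ : b % (N : ℤ) < (N : ℤ) := Int.emod_lt_of_pos b (by exact_mod_cast hNpos)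
        omega
      · have hnn : (0 : ℤ) ≤ b % (N : ℤ) := Int.emod_nonneg b (by positivity)
        have hco : (((b % (N : ℤ)).toNat : ℤ)) = b % (N : ℤ) := Int.toNat_of_nonneg hnn
        have : ((b % (N : ℤ)).toNat : ℤ) • g = b • g := by
          rw [hco]
          have hdecomp : b = (N : ℤ) * (b / (N : ℤ)) + b % (N : ℤ) :=
            (Int.mul_ediv_add_emod b (N : ℤ)).symm
          calc (b % (N : ℤ)) • g
              = ((N : ℤ) * (b / (N : ℤ))) • g + (b % (N : ℤ)) • g - ((N : ℤ) * (b / (N : ℤ))) • g := by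
                abel
            _ = b • g - ((N : ℤ) * (b / (N : ℤ))) • g := by rw [← add_zsmul, ← hdecomp]
            _ = b • g := by
                rw [mul_comm, mul_zsmul, natCast_zsmul, hNg, smul_zero, sub_zero]
        rw [← this, natCast_zsmul]
    calc M.card = (M.image fun b : ℤ => b • g).card := hcard.symm
      _ ≤ ((Finset.range N).image (fun c : ℕ => c • g)).card := Finset.card_le_card hsub
      _ ≤ (Finset.range N).card := Finset.card_image_le
      _ = N := Finset.card_range N
  -- (2) N ≤ |K|
  have h2 : N ≤ K.card := by
    have hmem : ∀ c : ℕ, (c • g : G) ∈ K := by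
      intro c
      refine Finset.mem_filter.mpr ⟨Finset.mem_univ _, ?_⟩
      have : m • (c • g) = (c : ℤ) • (m • g) := by
        rw [← natCast_zsmul, smul_smul, smul_smul, mul_comm]
      rw [this, h0, smul_zero]
    have step : ∀ a b : ℕ, b < N → a ≤ b → a • g = b • g → b = a := by
      intro a b hbN h hab
      have h2 : (b - a) • g + a • g = b • g := by rw [← add_nsmul, Nat.sub_add_cancel h]
      have h3 : (b - a) • g = 0 := by
        have h4 : (b - a) • g + a • g = a • g := h2.trans hab.symm
        exact add_eq_right.mp h4
      have hdvd := addOrderOf_dvd_of_nsmul_eq_zero h3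
      rw [← hNdef] at hdvd
      rcases Nat.eq_zero_or_pos (b - a) with h5 | h5
      · omega
      · have := Nat.le_of_dvd h5 hdvd
        omega
    have hinj : Set.InjOn (fun c : ℕ => c • g) ↑(Finset.range N) := by
      intro a ha b hb hab
      simp only at hab
      rcases le_total a b with h | h
      · exact (step a b (by simpa using hb) h hab).symm
      · exact step b a (by simpa using ha) h hab.symm
    calc N = (Finset.range N).card := (Finset.card_range N).symm
      _ = ((Finset.range N).image (fun c : ℕ => c • g)).card :=
          (Finset.card_image_of_injOn hinj).symm
      _ ≤ K.card := Finset.card_le_card (by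
          intro x hx
          obtain ⟨c, _, rfl⟩ := Finset.mem_image.mp hx
          exact hmem c)
  -- (5) |M| * |S| = |G|
  have hMS : M.card * S.card = Fintype.card G := by
    rw [← Finset.card_product, ← Finset.card_univ]
    refine Finset.card_bij (fun p _ => p.1 • p.2) (fun p _ => Finset.mem_univ _) ?_ ?_
    · intro p hp p' hp' h
      have hp := Finset.mem_product.mp hp
      have hp' := Finset.mem_product.mp hp'
      exact key p.1 p.2 p'.1 p'.2 hp.1 hp.2 hp'.1 hp'.2 h
    · intro x _
      obtain ⟨p, ⟨hp1, hp2, hp3⟩, _⟩ := hCS x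
      exact ⟨p, Finset.mem_product.mpr ⟨hp1, hp2⟩, hp3⟩
  -- (4) |S| * |K| ≤ |G|
  have h4 : S.card * K.card ≤ Fintype.card G := by
    rw [← Finset.card_product, ← Finset.card_univ]
    refine Finset.card_le_card_of_injOn (fun p => p.1 + p.2) (fun p _ => Finset.mem_univ _) ?_
    intro p hp p' hp' h
    simp only at h
    simp only [Finset.mem_coe, Finset.mem_product] at hp hp'
    have hk : m • p.2 = 0 := (Finset.mem_filter.mp hp.2).2
    have hk' : m • p'.2 = 0 := (Finset.mem_filter.mp hp'.2).2
    have hms : m • p.1 = m • p'.1 := by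
      have e1 : m • (p.1 + p.2) = m • p.1 := by rw [smul_add, hk, add_zero]
      have e2 : m • (p'.1 + p'.2) = m • p'.1 := by rw [smul_add, hk', add_zero]
      rw [← e1, ← e2, h]
    have := key m p.1 m p'.1 hm hp.1 hm hp'.1 hms
    have hss : p.1 = p'.1 := (Prod.ext_iff.mp this).2
    have : p.2 = p'.2 := by
      have := h
      rw [hss] at this
      exact add_left_cancel this
    exact Prod.ext hss this
  -- (6)(7): K.card ≤ |M|, hence N = |M|
  have hS0 : 0 < S.card := Finset.card_pos.mpr ⟨g, hg⟩
  have hKM : K.card ≤ M.card := by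
    have : K.card * S.card ≤ M.card * S.card := by
      calc K.card * S.card = S.card * K.card := mul_comm _ _
        _ ≤ Fintype.card G := h4
        _ = M.card * S.card := hMS.symm
    exact Nat.le_of_mul_le_mul_right this hS0
  have hNM : N = M.card := le_antisymm (le_trans h2 hKM) h1
  -- image of g in the quotient
  set gb : G ⧸ H := QuotientAddGroup.mk g with hgbdef
  have hgb0 : gb ≠ 0 := by
    simpa [hgbdef, QuotientAddGroup.eq_zero_iff] using hgH
  set d := addOrderOf gb with hddef
  have hd1 : d ≠ 1 := by
    rw [hddef, Ne, AddMonoid.addOrderOf_eq_one_iff]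
    exact hgb0
  -- (8) d ∣ N
  have hdN : d ∣ N := by
    apply addOrderOf_dvd_of_nsmul_eq_zero
    have : (N • gb : G ⧸ H) = QuotientAddGroup.mk (N • g) := by
      rw [hgbdef]
      exact (map_nsmul (QuotientAddGroup.mk' H) N g).symm
    rw [this, hNg]
    rfl
  -- (9) |M| * |T| = q − 1
  have hMT : M.card * T.card = Fintype.card (G ⧸ H) - 1 := by
    have hcard : (Finset.univ.erase (0 : G ⧸ H)).card = Fintype.card (G ⧸ H) - 1 := by
      rw [Finset.card_erase_of_mem (Finset.mem_univ _), Finset.card_univ]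
    rw [← hcard, ← Finset.card_product]
    refine Finset.card_bij (fun p _ => p.1 • p.2) ?_ ?_ ?_
    · intro p hp
      have hp := Finset.mem_product.mp hp
      refine Finset.mem_erase.mpr ⟨?_, Finset.mem_univ _⟩
      intro h
      exact hT0 ⟨p.1, hp.1, p.2, hp.2, h⟩
    · intro p hp p' hp' h
      have hp := Finset.mem_product.mp hp
      have hp' := Finset.mem_product.mp hp'
      have hne : p'.1 • p'.2 ≠ 0 := fun hh => hT0 ⟨p'.1, hp'.1, p'.2, hp'.2, hh⟩
      exact (hT _ hne).unique ⟨hp.1, hp.2, h⟩ ⟨hp'.1, hp'.2, rfl⟩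
    · intro x hx
      have hx0 : x ≠ 0 := (Finset.mem_erase.mp hx).1
      obtain ⟨p, ⟨hp1, hp2, hp3⟩, _⟩ := hT x hx0
      exact ⟨p, Finset.mem_product.mpr ⟨hp1, hp2⟩, hp3⟩
  -- (10) final contradiction
  obtain ⟨p, hp, hpd⟩ := Nat.exists_prime_and_dvd hd1
  have hpq : p ∣ Fintype.card (G ⧸ H) := hpd.trans (hddef ▸ addOrderOf_dvd_card)
  have hpM : p ∣ M.card := hpd.trans (hdN.trans (hNM ▸ dvd_refl N))
  have hpq1 : p ∣ Fintype.card (G ⧸ H) - 1 := hpM.trans ⟨T.card, hMT.symm⟩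
  have hqpos : 0 < Fintype.card (G ⧸ H) := Fintype.card_pos
  have : p ∣ 1 := by
    have := Nat.dvd_sub hpq hpq1
    rwa [Nat.sub_sub_self (by omega)] at this
  exact hp.ne_one (Nat.dvd_one.mp this)
end
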